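/- arXiv:1411.6983 — 8 statements merged into one kernel-verified Lean document; each statement's English description precedes it below -/
import Mathlib

section
/- Let R = k[x_0,...,x_n] with n ≥ 2 and let J = (x_0·x_1, x_2, x_3, ..., x_n), the ideal of the two points [1:0:...:0] and [0:1:0:...:0] in P^n. Then the Jacobian ideal I = (J, I_n(Θ)) equals the irrelevant maximal ideal (x_0,...,x_n), and the element x_0·x_1 lies in J ∩ I^2 but not in J·I; in particular the pair (J,I) is not Aluffi torsion-free. -/
/-!
The coordinates `x₂, …, xₙ` are generators of `J`, and `x₀`, `x₁` are `n`-minors of the Jacobian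
matrix: deleting the column of `x₀` (resp. `x₁`) leaves an upper triangular matrix with diagonal
`∂(x₀x₁)/∂x₁ = x₀` (resp. `x₁`), `1, …, 1`. Conversely, modulo the irrelevant ideal `𝔪` the
first row of `Θ` vanishes, so only `n - 1` rows survive and every `n`-minor lies in `𝔪`; hence
`I = 𝔪`. For `x₀x₁ ∉ J·I`, send `x₀, x₁ ↦ t` and the other variables to `0`: `J` lands in `(t²)`
and `I` in `(t)`, so `J·I` lands in `(t³)`, which does not contain `t²`.
-/

open MvPolynomial

/-- The ideal generated by the `u × u` minors of a matrix. -/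
noncomputable def minorsIdeal {R : Type*} [CommRing R] {ι κ : Type*}
    (M : Matrix ι κ R) (u : ℕ) : Ideal R :=
  Ideal.span {d | ∃ (f : Fin u → ι) (g : Fin u → κ), d = (M.submatrix f g).det}

theorem MvPolynomial.mem_idealOfVars_iff {σ R : Type*} [CommRing R] (p : MvPolynomial σ R) :
    p ∈ idealOfVars σ R ↔ constantCoeff p = 0 := by
  simpa [constantCoeff_eq, Finsupp.degree_eq_zero_iff] using mem_pow_idealOfVars_iff' 1 p

theorem Matrix.det_submatrix_eq_zero_of_card_lt {R ι κ : Type*} [CommRing R] (M : Matrix ι κ R)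
    (s : Finset ι) (hs : ∀ i ∉ s, M i = 0) {u : ℕ} (hu : s.card < u)
    (f : Fin u → ι) (c : Fin u → κ) : (M.submatrix f c).det = 0 := by
  by_cases hf : ∀ i, f i ∈ s
  · obtain ⟨i, -, i', -, hne, heq⟩ := Finset.exists_ne_map_eq_of_card_lt_of_maps_to
      (s := Finset.univ) (by simpa using hu) (fun i _ => hf i)
    exact det_zero_of_row_eq hne (by ext j; simp [heq])
  · obtain ⟨i, hi⟩ := not_forall.mp hf
    exact det_eq_zero_of_row_eq_zero i fun j => by simp [hs _ hi]

theorem minorsIdeal_le_ker_of_card_lt {R S ι κ : Type*} [CommRing R] [CommRing S] (φ : R →+* S)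
    (M : Matrix ι κ R) (s : Finset ι) (hs : ∀ i ∉ s, ∀ j, φ (M i j) = 0) {u : ℕ}
    (hu : s.card < u) : minorsIdeal M u ≤ RingHom.ker φ := by
  rw [minorsIdeal, Ideal.span_le]
  rintro _ ⟨f, c, rfl⟩
  rw [SetLike.mem_coe, RingHom.mem_ker, RingHom.map_det, RingHom.mapMatrix_apply,
    ← Matrix.submatrix_map]
  exact (M.map φ).det_submatrix_eq_zero_of_card_lt s (fun i hi => funext (hs i hi)) hu f c

theorem Ideal.mul_le_comap_span_singleton_mul {R S : Type*} [CommRing R] [CommRing S]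
    (φ : R →+* S) {I J : Ideal R} {a b : S} (hI : I ≤ (span {a}).comap φ)
    (hJ : J ≤ (span {b}).comap φ) : I * J ≤ (span {a * b}).comap φ := by
  rw [← map_le_iff_le_comap, Ideal.map_mul, ← span_singleton_mul_span_singleton]
  exact mul_mono (map_le_iff_le_comap.mpr hI) (map_le_iff_le_comap.mpr hJ)

namespace MvPolynomial

noncomputable def jacobianMatrix {R σ ι : Type*} [CommRing R] (g : ι → MvPolynomial σ R) :
    Matrix ι σ (MvPolynomial σ R) :=
  fun i j => pderiv j (g i)

variable {R : Type*} [CommRing R] {m : ℕ}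

noncomputable def consCoordinates (f : MvPolynomial (Fin (m + 2)) R) :
    Fin (m + 1) → MvPolynomial (Fin (m + 2)) R :=
  Fin.cons f fun i => X i.succ.succ

theorem det_jacobianMatrix_consCoordinates_submatrix (f : MvPolynomial (Fin (m + 2)) R)
    (a : Fin (m + 2)) (ha : ∀ j : Fin m, a ≠ j.succ.succ) :
    ((jacobianMatrix (consCoordinates f)).submatrix id
      (Fin.cons a fun j => j.succ.succ)).det = pderiv a f := by
  rw [Matrix.det_of_isUpperTriangular]
  · simp [Fin.prod_univ_succ, jacobianMatrix, consCoordinates]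
  · intro i j hji
    induction i using Fin.cases with
    | zero => exact absurd hji (Fin.not_lt_zero j)
    | succ i =>
      induction j using Fin.cases with
      | zero => simp [jacobianMatrix, consCoordinates, (ha i).symm]
      | succ j =>
        rw [id, id, Fin.succ_lt_succ_iff] at hji
        simp [jacobianMatrix, consCoordinates, hji.ne']

theorem minorsIdeal_jacobianMatrix_le_idealOfVars :
    minorsIdeal (jacobianMatrix (consCoordinates (X 0 * X 1 : MvPolynomial (Fin (m + 2)) R)))
      (m + 1) ≤ idealOfVars (Fin (m + 2)) R := by
  intro p hp
  rw [mem_idealOfVars_iff]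
  refine minorsIdeal_le_ker_of_card_lt constantCoeff _ (Finset.univ.erase 0) ?_ (by simp) hp
  intro i hi j
  obtain rfl : i = 0 := by simpa using hi
  simp [jacobianMatrix, consCoordinates]

theorem span_consCoordinates_sup_minorsIdeal_eq_idealOfVars :
    Ideal.span (Set.range (consCoordinates (X 0 * X 1 : MvPolynomial (Fin (m + 2)) R))) ⊔
      minorsIdeal (jacobianMatrix (consCoordinates (X 0 * X 1))) (m + 1) =
      idealOfVars (Fin (m + 2)) R := by
  have hminor (a b : Fin (m + 2)) (ha : ∀ j : Fin m, a ≠ j.succ.succ)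
      (hb : pderiv a (X 0 * X 1 : MvPolynomial (Fin (m + 2)) R) = X b) :
      X b ∈ minorsIdeal (jacobianMatrix (consCoordinates (X 0 * X 1))) (m + 1) :=
    Ideal.subset_span ⟨id, _, (hb ▸ det_jacobianMatrix_consCoordinates_submatrix _ a ha).symm⟩
  refine le_antisymm (sup_le ?_ minorsIdeal_jacobianMatrix_le_idealOfVars) ?_
  · rw [Ideal.span_le]
    rintro _ ⟨i, rfl⟩
    induction i using Fin.cases with
    | zero => exact Ideal.mul_mem_left _ _ (Ideal.subset_span ⟨1, rfl⟩)
    | succ i => exact Ideal.subset_span ⟨i.succ.succ, rfl⟩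
  · rw [idealOfVars, Ideal.span_le]
    rintro _ ⟨j, rfl⟩
    induction j using Fin.cases with
    | zero => exact Ideal.mem_sup_right (hminor 1 0 (fun j => by simp [Fin.ext_iff]) (by simp))
    | succ j =>
      induction j using Fin.cases with
      | zero => exact Ideal.mem_sup_right (hminor 0 1 (fun j => by simp [Fin.ext_iff]) (by simp))
      | succ j => exact Ideal.mem_sup_left (Ideal.subset_span ⟨j.succ, rfl⟩)

theorem X_zero_mul_X_one_notMem_span_consCoordinates_mul_idealOfVars [Nontrivial R] :
    (X 0 * X 1 : MvPolynomial (Fin (m + 2)) R) ∉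
      Ideal.span (Set.range (consCoordinates (X 0 * X 1))) * idealOfVars (Fin (m + 2)) R := by
  let t : Polynomial R := Polynomial.X
  let φ : MvPolynomial (Fin (m + 2)) R →+* Polynomial R :=
    (aeval (Fin.cons t (Fin.cons t 0) : Fin (m + 2) → Polynomial R)).toRingHom
  have hφ : φ (X 0 * X 1) = t ^ 2 := by simp [φ, sq]
  have hJ : Ideal.span (Set.range (consCoordinates (X 0 * X 1))) ≤
      (Ideal.span {t ^ 2}).comap φ := by
    rw [Ideal.span_le]
    rintro _ ⟨i, rfl⟩
    induction i using Fin.cases with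
    | zero => simp [consCoordinates, hφ]
    | succ i => simp [consCoordinates, φ]
  have hI : idealOfVars (Fin (m + 2)) R ≤ (Ideal.span {t}).comap φ := by
    rw [idealOfVars, Ideal.span_le]
    rintro _ ⟨j, rfl⟩
    refine Fin.cases ?_ (Fin.cases ?_ ?_) j <;> simp [φ]
  intro h
  have h3 := Ideal.mul_le_comap_span_singleton_mul φ hJ hI h
  rw [Ideal.mem_comap, Ideal.mem_span_singleton, hφ, ← pow_succ, Polynomial.X_pow_dvd_iff] at h3
  simpa [t] using h3 2 (by norm_num)

end MvPolynomial

/-- For `J = (x₀x₁, x₂, …, xₙ)` (ideal of two points in general position in `ℙⁿ`,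
`n ≥ 2`), the Jacobian ideal `I = (J, Iₙ(Θ))` equals the irrelevant maximal ideal
`(x₀,…,xₙ)`, and `x₀x₁ ∈ J ∩ I² \ J·I`; in particular the pair is not Aluffi torsion-free. -/
theorem stmt_1 {k : Type*} [Field k] (n : ℕ) (hn : 2 ≤ n)
    (J I : Ideal (MvPolynomial (Fin (n + 1)) k))
    (g : Fin n → MvPolynomial (Fin (n + 1)) k)
    (hg : g = fun i : Fin n => if (i : ℕ) = 0 then
            X (⟨0, by omega⟩ : Fin (n + 1)) * X (⟨1, by omega⟩ : Fin (n + 1))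
          else X (⟨(i : ℕ) + 1, by exact Nat.succ_lt_succ i.isLt⟩ : Fin (n + 1)))
    (hJ : J = Ideal.span (Set.range g))
    (Θ : Matrix (Fin n) (Fin (n + 1)) (MvPolynomial (Fin (n + 1)) k))
    (hΘ : Θ = fun i j => pderiv j (g i))
    (hI : I = J ⊔ minorsIdeal Θ n) :
    I = Ideal.span (Set.range X) ∧
    X (⟨0, by omega⟩ : Fin (n + 1)) * X (⟨1, by omega⟩ : Fin (n + 1)) ∈ J ⊓ I ^ 2 ∧
    X (⟨0, by omega⟩ : Fin (n + 1)) * X (⟨1, by omega⟩ : Fin (n + 1)) ∉ J * I := by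
  obtain ⟨m, rfl⟩ : ∃ m, n = m + 1 := ⟨n - 1, by omega⟩
  have hg' : g = consCoordinates (X 0 * X 1) := by
    subst hg
    funext i
    induction i using Fin.cases with
    | zero => rfl
    | succ i => simp [consCoordinates, Fin.ext_iff]
  obtain rfl : Θ = jacobianMatrix (consCoordinates (X 0 * X 1)) := hg' ▸ hΘ
  subst hg' hJ hI
  simp only [Fin.zero_eta, Fin.mk_one]
  rw [span_consCoordinates_sup_minorsIdeal_eq_idealOfVars]
  refine ⟨rfl, ⟨Ideal.subset_span ⟨0, rfl⟩, ?_⟩,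
    X_zero_mul_X_one_notMem_span_consCoordinates_mul_idealOfVars⟩
  rw [sq]
  exact Ideal.mul_mem_mul (Ideal.subset_span ⟨0, rfl⟩) (Ideal.subset_span ⟨1, rfl⟩)
end

section
/- Let 3 ≤ s ≤ n and let J = (x_i·x_j : 0 ≤ i < j ≤ s-1) + (x_s, ..., x_n) ⊂ R = k[x_0,...,x_n] be the ideal of the first s coordinate points of P^n. Then the Jacobian ideal is I = (J, x_0^{s-1}, ..., x_{s-1}^{s-1}), and the pair (J, I) is Aluffi torsion-free, i.e., J ∩ I^t ⊆ J·I^{t-1} for all t ≥ 2. -/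
open MvPolynomial

/-!
Write `M = (x_i^{s-1} : i < s)`, so that `I = J + M`, and `P = (x_0, …, x_{s-1})`.

An `n`-minor of `Θ` with repeated rows vanishes; otherwise at most `n + 1 - s` of its rows come
from the linear generators `x_j`, so at least `s - 1` come from the quadrics `x_a x_b`, whose
partial derivatives lie in `P`. Hence the minors lie in `P^{s-1} ⊆ I`: a monomial of degree
`s - 1` in `x_0, …, x_{s-1}` is either a pure power or divisible by some `x_a x_b ∈ J`.
Conversely `x_i^{s-1}` is a diagonal minor.

For torsion-freeness, since `s ≥ 3` a mixed product `x_a^{s-1} x_b^{s-1}` lies in `J²`, so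
`I^{t+1} ⊆ J I^t + (x_i^{(t+1)(s-1)} : i < s)`. If `∑ c_i x_i^{(t+1)(s-1)}` lies in `J`, then
setting all variables but `x_i` to zero kills `J` and shows that `c_i` lies in the ideal of the
other variables; and `x_m x_i^{(t+1)(s-1)} ∈ J I^t` for `m ≠ i`.
-/

open Finset

theorem Matrix.det_mem_pow_card_of_mem {m R : Type*} [Fintype m] [DecidableEq m] [CommRing R]
    (M : Matrix m m R) (P : Ideal R) (S : Finset m) (hS : ∀ i ∈ S, ∀ j, M i j ∈ P) :
    M.det ∈ P ^ #S := by
  rw [← M.det_transpose, Matrix.det_apply']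
  refine Ideal.sum_mem _ fun σ _ => Ideal.mul_mem_left _ _ ?_
  rw [← Finset.prod_mul_prod_compl S, ← Finset.prod_const]
  exact Ideal.mul_mem_right _ _ (Ideal.prod_mem_prod fun i hi => hS i hi _)

theorem card_sub_card_le_card_filter_isLeft {α β γ : Type*}
    [Fintype α] [Fintype β] [Fintype γ] {f : α → β ⊕ γ} (hf : Function.Injective f) :
    Fintype.card α - Fintype.card γ ≤ #{a | (f a).isLeft} := by
  have hright : #{a | (f a).isRight} ≤ Fintype.card γ :=
    calc #{a | (f a).isRight} ≤ #{x : β ⊕ γ | x.isRight} :=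
          card_le_card_of_injOn f (by intro a; simp) hf.injOn
      _ = Fintype.card γ := by rw [← Fintype.card_subtype, Fintype.card_congr Equiv.sumIsRight]
  have := card_filter_add_card_filter_not (s := univ) (fun a => (f a).isLeft)
  simp only [card_univ, Bool.not_eq_true, Sum.isLeft_eq_false] at this
  omega

theorem Fin.card_subtype_le_val (N m : ℕ) :
    Fintype.card {i : Fin N // m ≤ (i : ℕ)} = N - m := by
  have := card_filter_add_card_filter_not (s := (univ : Finset (Fin N))) (fun i => (i : ℕ) < m)
  simp only [card_univ, Fintype.card_fin, not_lt, Fin.card_filter_val_lt] at this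
  rw [Fintype.card_subtype]
  omega

theorem Fin.card_filter_succAbove_val_lt {N m : ℕ} {i : Fin (N + 1)} (hi : (i : ℕ) < m)
    (hm : m ≤ N + 1) : #{b : Fin N | (i.succAbove b : ℕ) < m} = m - 1 := by
  have h := congrArg (fun u => #(filter (fun j : Fin (N + 1) => (j : ℕ) < m) u))
    (Fin.univ_succAbove N i)
  simp only [filter_cons, hi, if_true, card_cons, filter_map, card_map,
    Fin.card_filter_val_lt, min_eq_right hm] at h
  exact Nat.eq_sub_of_add_eq h.symm

theorem MvPolynomial.sub_aeval_single_X_mem_span_X {R σ : Type*} [CommRing R] [DecidableEq σ]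
    (i : σ) (f : MvPolynomial σ R) :
    f - aeval (Pi.single i (X i)) f ∈ Ideal.span (X '' {i}ᶜ) := by
  induction f using MvPolynomial.induction_on with
  | C a => simp
  | add f g hf hg => simpa [add_sub_add_comm] using add_mem hf hg
  | mul_X f j hf =>
    rcases eq_or_ne j i with rfl | hj
    · simpa [← sub_mul] using Ideal.mul_mem_right (X j) _ hf
    · simpa [Pi.single_apply, hj] using
        Ideal.mul_mem_left _ f (Ideal.subset_span (Set.mem_image_of_mem X hj))

namespace CoordinatePoints

variable (k : Type*) [CommRing k] (n s : ℕ)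

abbrev Gen : Type :=
  {p : Fin (n + 1) × Fin (n + 1) // p.1 < p.2 ∧ (p.2 : ℕ) ≤ s - 1} ⊕
    {i : Fin (n + 1) // s ≤ (i : ℕ)}

noncomputable def gens : Gen n s → MvPolynomial (Fin (n + 1)) k :=
  Sum.elim (fun p => X p.1.1 * X p.1.2) (fun i => X i.1)

noncomputable def pointIdeal : Ideal (MvPolynomial (Fin (n + 1)) k) :=
  Ideal.span (Set.range (gens k n s))

noncomputable def powerIdeal (e : ℕ) : Ideal (MvPolynomial (Fin (n + 1)) k) :=
  Ideal.span {f | ∃ i : Fin (n + 1), (i : ℕ) < s ∧ f = X i ^ e}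

noncomputable def jacobianIdeal : Ideal (MvPolynomial (Fin (n + 1)) k) :=
  pointIdeal k n s ⊔ powerIdeal k n s (s - 1)

noncomputable def variablesIdeal : Ideal (MvPolynomial (Fin (n + 1)) k) :=
  Ideal.span (X '' {i | (i : ℕ) < s})

noncomputable def jacobian : Matrix (Gen n s) (Fin (n + 1)) (MvPolynomial (Fin (n + 1)) k) :=
  fun r j => pderiv j (gens k n s r)

variable {k n s}

theorem X_mem_pointIdeal {i : Fin (n + 1)} (hi : s ≤ (i : ℕ)) : X i ∈ pointIdeal k n s :=
  Ideal.subset_span ⟨Sum.inr ⟨i, hi⟩, rfl⟩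

theorem X_mul_X_mem_pointIdeal {a b : Fin (n + 1)} (hab : a ≠ b) :
    X a * X b ∈ pointIdeal k n s := by
  wlog hlt : a < b generalizing a b
  · simpa [mul_comm] using this hab.symm (hab.lt_or_gt.resolve_left hlt)
  by_cases hb : s ≤ (b : ℕ)
  · exact Ideal.mul_mem_left _ _ (X_mem_pointIdeal hb)
  · exact Ideal.subset_span ⟨Sum.inl ⟨(a, b), hlt, show (b : ℕ) ≤ s - 1 by omega⟩, rfl⟩

theorem X_pow_mem_powerIdeal {i : Fin (n + 1)} (hi : (i : ℕ) < s) (e : ℕ) :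
    X i ^ e ∈ powerIdeal k n s e :=
  Ideal.subset_span ⟨i, hi, rfl⟩

theorem X_pow_mem_jacobianIdeal_pow {i : Fin (n + 1)} (hi : (i : ℕ) < s) {e t : ℕ}
    (h : t * (s - 1) ≤ e) : X i ^ e ∈ jacobianIdeal k n s ^ t := by
  rw [← Nat.add_sub_cancel' h, pow_add, pow_mul']
  exact Ideal.mul_mem_right _ _
    (Ideal.pow_mem_pow (Ideal.mem_sup_right (X_pow_mem_powerIdeal hi _)) t)

theorem prod_X_mem_jacobianIdeal (hs : 2 ≤ s) (v : Fin (s - 1) → Fin (n + 1))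
    (hv : ∀ b, (v b : ℕ) < s) : ∏ b, X (v b) ∈ jacobianIdeal k n s := by
  by_cases hconst : ∃ a b, v a ≠ v b
  · obtain ⟨a, b, hab⟩ := hconst
    have hdvd : X (v a) * X (v b) ∣ ∏ c, X (R := k) (v c) := by
      rw [← prod_pair (f := fun c => X (R := k) (v c)) (ne_of_apply_ne v hab)]
      exact prod_dvd_prod_of_subset _ _ _ (subset_univ _)
    exact Ideal.mem_sup_left (Ideal.mem_of_dvd _ hdvd (X_mul_X_mem_pointIdeal hab))
  · push Not at hconst
    have a : Fin (s - 1) := ⟨0, by omega⟩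
    rw [prod_congr rfl fun b _ => congrArg X (hconst b a), prod_const, card_univ,
      Fintype.card_fin]
    exact Ideal.mem_sup_right (X_pow_mem_powerIdeal (hv a) _)

theorem variablesIdeal_pow_le_jacobianIdeal (hs : 2 ≤ s) :
    variablesIdeal k n s ^ (s - 1) ≤ jacobianIdeal k n s := by
  rw [variablesIdeal, Ideal.span, Submodule.span_pow, ← Ideal.span, Ideal.span_le]
  intro x hx
  obtain ⟨v, rfl⟩ := Set.mem_pow.1 hx
  choose w hw hwv using fun b => (v b).2
  rw [List.prod_ofFn]
  simp only [← hwv]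
  exact prod_X_mem_jacobianIdeal hs w hw

theorem jacobian_inl_mem_variablesIdeal
    (p : {p : Fin (n + 1) × Fin (n + 1) // p.1 < p.2 ∧ (p.2 : ℕ) ≤ s - 1})
    (j : Fin (n + 1)) :
    jacobian k n s (.inl p) j ∈ variablesIdeal k n s := by
  have hmem (i : Fin (n + 1)) (hi : (i : ℕ) < s) : X i ∈ variablesIdeal k n s :=
    Ideal.subset_span ⟨i, hi, rfl⟩
  have h1 : (p.1.1 : ℕ) < s := by have := p.2.1; have := p.2.2; omega
  have h2 : (p.1.2 : ℕ) < s := by have := p.2.2; omega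
  simp only [jacobian, gens, Sum.elim_inl, pderiv_mul]
  exact add_mem (Ideal.mul_mem_left _ _ (hmem _ h2)) (Ideal.mul_mem_right _ _ (hmem _ h1))

theorem minorsIdeal_jacobian_le_variablesIdeal_pow (hsn : s ≤ n + 1) :
    minorsIdeal (jacobian k n s) n ≤ variablesIdeal k n s ^ (s - 1) := by
  rw [minorsIdeal, Ideal.span_le]
  rintro _ ⟨f, g, rfl⟩
  by_cases hf : Function.Injective f
  · have hcard : s - 1 ≤ #{b | (f b).isLeft} := by
      have := card_sub_card_le_card_filter_isLeft hf
      rw [Fintype.card_fin, Fin.card_subtype_le_val] at this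
      omega
    refine Ideal.pow_le_pow_right hcard (Matrix.det_mem_pow_card_of_mem _ _ _ fun b hb j => ?_)
    obtain ⟨p, hp⟩ := Sum.isLeft_iff.1 (mem_filter.1 hb).2
    simpa [hp] using jacobian_inl_mem_variablesIdeal p (g j)
  · obtain ⟨a, b, hfab, hab⟩ := Function.not_injective_iff.1 hf
    rw [SetLike.mem_coe, Matrix.det_zero_of_row_eq hab (by ext j; simp [hfab])]
    exact zero_mem _

/-- For `j ≠ i`, the generator `x_i x_j` (if `j < s`) or `x_j` (if `j ≥ s`): off column `i`, its
row of `Θ` is supported in column `j`, with entry `x_i` or `1`. -/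
def diagRow {i : Fin (n + 1)} (hi : (i : ℕ) < s) (j : Fin (n + 1)) (hj : j ≠ i) : Gen n s :=
  if hjs : (j : ℕ) < s then
    if hij : i < j then .inl ⟨(i, j), hij, show (j : ℕ) ≤ s - 1 by omega⟩
    else .inl ⟨(j, i), lt_of_le_of_ne (not_lt.1 hij) hj, show (i : ℕ) ≤ s - 1 by omega⟩
  else .inr ⟨j, by omega⟩

theorem jacobian_diagRow {i : Fin (n + 1)} (hi : (i : ℕ) < s) {j : Fin (n + 1)} (hj : j ≠ i)
    {c : Fin (n + 1)} (hc : c ≠ i) :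
    jacobian k n s (diagRow hi j hj) c =
      if c = j then (if (j : ℕ) < s then X i else 1) else 0 := by
  unfold diagRow
  split_ifs <;> simp_all [jacobian, gens, pderiv_X]

theorem X_pow_mem_minorsIdeal (hsn : s ≤ n + 1) {i : Fin (n + 1)} (hi : (i : ℕ) < s) :
    X i ^ (s - 1) ∈ minorsIdeal (jacobian k n s) n := by
  set rows := fun b => diagRow hi (i.succAbove b) (i.succAbove_ne b)
  refine Ideal.subset_span ⟨rows, i.succAbove, ?_⟩
  have hdiag : (jacobian k n s).submatrix rows i.succAbove =
      Matrix.diagonal fun b => if (i.succAbove b : ℕ) < s then X i else 1 := by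
    ext a b : 1
    simp [rows, jacobian_diagRow, Matrix.diagonal_apply, eq_comm]
  rw [hdiag, Matrix.det_diagonal, prod_ite, prod_const, prod_const_one, mul_one,
    Fin.card_filter_succAbove_val_lt hi hsn]

theorem jacobianIdeal_eq_sup_minorsIdeal (hs : 2 ≤ s) (hsn : s ≤ n + 1) :
    jacobianIdeal k n s = pointIdeal k n s ⊔ minorsIdeal (jacobian k n s) n := by
  refine le_antisymm (sup_le_sup_left ?_ _) (sup_le le_sup_left ?_)
  · rw [powerIdeal, Ideal.span_le]
    rintro _ ⟨i, hi, rfl⟩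
    exact X_pow_mem_minorsIdeal hsn hi
  · exact (minorsIdeal_jacobian_le_variablesIdeal_pow hsn).trans
      (variablesIdeal_pow_le_jacobianIdeal hs)

theorem X_pow_mul_X_pow_mem_pointIdeal_sq (hs : 3 ≤ s) {a b : Fin (n + 1)} (hab : a ≠ b) :
    X a ^ (s - 1) * X b ^ (s - 1) ∈ pointIdeal k n s ^ 2 := by
  obtain ⟨m, rfl⟩ : ∃ m, s = m + 3 := ⟨s - 3, by omega⟩
  have hJ := X_mul_X_mem_pointIdeal (k := k) (s := m + 3) hab
  show X a ^ (m + 2) * X b ^ (m + 2) ∈ _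
  rw [show X a ^ (m + 2) * X b ^ (m + 2) = (X a * X b) * (X a * X b * (X a * X b) ^ m) by ring,
    sq]
  exact Ideal.mul_mem_mul hJ (Ideal.mul_mem_right _ _ hJ)

theorem powerIdeal_le_jacobianIdeal_pow (t : ℕ) :
    powerIdeal k n s (t * (s - 1)) ≤ jacobianIdeal k n s ^ t := by
  rw [powerIdeal, Ideal.span_le]
  rintro _ ⟨i, hi, rfl⟩
  exact X_pow_mem_jacobianIdeal_pow hi le_rfl

theorem powerIdeal_mul_powerIdeal_le (hs : 3 ≤ s) (t : ℕ) :
    powerIdeal k n s ((t + 1) * (s - 1)) * powerIdeal k n s (s - 1) ≤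
      pointIdeal k n s * jacobianIdeal k n s ^ (t + 1) ⊔
        powerIdeal k n s ((t + 2) * (s - 1)) := by
  rw [powerIdeal, powerIdeal, Ideal.span_mul_span', Ideal.span_le]
  rintro _ ⟨_, ⟨a, ha, rfl⟩, _, ⟨b, hb, rfl⟩, rfl⟩
  dsimp only
  rcases eq_or_ne a b with rfl | hab
  · refine Ideal.mem_sup_right (Ideal.subset_span ⟨a, ha, ?_⟩)
    rw [← pow_add]; congr 1; ring
  · refine Ideal.mem_sup_left ?_
    have hmixed : X a ^ (s - 1) * X b ^ (s - 1) ∈ pointIdeal k n s * jacobianIdeal k n s :=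
      Ideal.mul_mono_right le_sup_left
        (sq (pointIdeal k n s) ▸ X_pow_mul_X_pow_mem_pointIdeal_sq hs hab)
    rw [show X a ^ ((t + 1) * (s - 1)) * X b ^ (s - 1) =
        (X a ^ (s - 1) * X b ^ (s - 1)) * X a ^ (t * (s - 1)) by ring, pow_succ', ← mul_assoc]
    exact Ideal.mul_mem_mul hmixed (X_pow_mem_jacobianIdeal_pow ha le_rfl)

theorem jacobianIdeal_pow_succ_le (hs : 3 ≤ s) (t : ℕ) :
    jacobianIdeal k n s ^ (t + 1) ≤
      pointIdeal k n s * jacobianIdeal k n s ^ t ⊔ powerIdeal k n s ((t + 1) * (s - 1)) := by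
  induction t with
  | zero => simp [jacobianIdeal]
  | succ t ih =>
    set J := pointIdeal k n s
    set I := jacobianIdeal k n s
    set N := powerIdeal k n s ((t + 1) * (s - 1))
    have hNJ : N * J ≤ J * I ^ (t + 1) := by
      rw [mul_comm]; exact Ideal.mul_mono_right (powerIdeal_le_jacobianIdeal_pow _)
    calc I ^ (t + 2) ≤ (J * I ^ t ⊔ N) * I := by rw [pow_succ]; exact Ideal.mul_mono_left ih
      _ = J * I ^ (t + 1) ⊔ (N * J ⊔ N * powerIdeal k n s (s - 1)) := by
        rw [Ideal.sup_mul, mul_assoc, ← pow_succ, ← Ideal.mul_sup]; rfl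
      _ ≤ J * I ^ (t + 1) ⊔ powerIdeal k n s ((t + 2) * (s - 1)) :=
        sup_le le_sup_left (sup_le (hNJ.trans le_sup_left) (powerIdeal_mul_powerIdeal_le hs t))

theorem pointIdeal_le_ker_aeval_single {i : Fin (n + 1)} (hi : (i : ℕ) < s) :
    pointIdeal k n s ≤ RingHom.ker (aeval (Pi.single i (X (R := k) i))) := by
  rw [pointIdeal, Ideal.span_le]
  rintro _ ⟨p | m, rfl⟩
  · have hne : p.1.1 ≠ p.1.2 := p.2.1.ne
    simp only [gens, Sum.elim_inl, SetLike.mem_coe, RingHom.mem_ker, map_mul, aeval_X,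
      Pi.single_apply]
    split_ifs <;> simp_all
  · have hne : m.1 ≠ i := fun h => by have := m.2; rw [h] at this; omega
    simp [gens, hne]

theorem X_mul_X_pow_mem (hs : 2 ≤ s) {i m : Fin (n + 1)} (hi : (i : ℕ) < s) (hm : m ≠ i)
    (t : ℕ) : X m * X i ^ ((t + 1) * (s - 1)) ∈ pointIdeal k n s * jacobianIdeal k n s ^ t := by
  have hT : (t + 1) * (s - 1) = t * (s - 1) + (s - 2) + 1 := by
    rw [add_mul, one_mul]; omega
  rw [hT, pow_succ', ← mul_assoc]
  exact Ideal.mul_mem_mul (X_mul_X_mem_pointIdeal hm)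
    (X_pow_mem_jacobianIdeal_pow hi (Nat.le_add_right _ _))

theorem inf_powerIdeal_le (hs : 2 ≤ s) (t : ℕ) :
    pointIdeal k n s ⊓ powerIdeal k n s ((t + 1) * (s - 1)) ≤
      pointIdeal k n s * jacobianIdeal k n s ^ t := by
  set T := (t + 1) * (s - 1)
  have hT : T ≠ 0 := Nat.mul_ne_zero (Nat.succ_ne_zero t) (by omega)
  rintro x ⟨hxJ, hxN⟩
  have hrange : {f | ∃ i : Fin (n + 1), (i : ℕ) < s ∧ f = X i ^ T} =
      Set.range fun i : {i : Fin (n + 1) // (i : ℕ) < s} => X (R := k) i.1 ^ T := by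
    ext; simp [eq_comm]
  rw [SetLike.mem_coe, powerIdeal, hrange, Ideal.mem_span_range_iff_exists_fun] at hxN
  obtain ⟨c, rfl⟩ := hxN
  refine Ideal.sum_mem _ fun i _ => ?_
  have hci : aeval (Pi.single i.1 (X (R := k) i.1)) (c i) = 0 := by
    have h0 := pointIdeal_le_ker_aeval_single i.2 hxJ
    rw [RingHom.mem_ker, map_sum, Finset.sum_eq_single i] at h0
    · simpa [hT] using h0
    · intro j _ hji
      simp [Subtype.val_injective.ne hji, hT]
    · simp
  have hc := MvPolynomial.sub_aeval_single_X_mem_span_X i.1 (c i)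
  rw [hci, sub_zero] at hc
  have hle : Ideal.span (X '' {i.1}ᶜ) * Ideal.span {X i.1 ^ T} ≤
      pointIdeal k n s * jacobianIdeal k n s ^ t := by
    rw [Ideal.span_mul_span', Ideal.span_le]
    rintro _ ⟨_, ⟨m, hm, rfl⟩, _, rfl, rfl⟩
    exact X_mul_X_pow_mem hs i.2 hm t
  exact hle (Ideal.mul_mem_mul hc (Ideal.mem_span_singleton_self _))

theorem inf_jacobianIdeal_pow_succ_le (hs : 3 ≤ s) (t : ℕ) :
    pointIdeal k n s ⊓ jacobianIdeal k n s ^ (t + 1) ≤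
      pointIdeal k n s * jacobianIdeal k n s ^ t :=
  calc pointIdeal k n s ⊓ jacobianIdeal k n s ^ (t + 1)
      ≤ pointIdeal k n s ⊓ (pointIdeal k n s * jacobianIdeal k n s ^ t ⊔
          powerIdeal k n s ((t + 1) * (s - 1))) :=
        inf_le_inf_left _ (jacobianIdeal_pow_succ_le hs t)
    _ = pointIdeal k n s * jacobianIdeal k n s ^ t ⊔
          pointIdeal k n s ⊓ powerIdeal k n s ((t + 1) * (s - 1)) := by
        rw [inf_comm, sup_inf_assoc_of_le _ Ideal.mul_le_left, inf_comm]
    _ ≤ pointIdeal k n s * jacobianIdeal k n s ^ t :=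
        sup_le le_rfl (inf_powerIdeal_le (by omega) t)

end CoordinatePoints

/-- For `J = (xᵢxⱼ : 0 ≤ i < j ≤ s-1) + (x_s,…,xₙ)` (ideal of the first `s`
coordinate points of `ℙⁿ`, `3 ≤ s ≤ n`), the Jacobian ideal is
`I = (J, x₀^{s-1},…,x_{s-1}^{s-1})` and the pair `(J, I)` is Aluffi torsion-free. -/
theorem stmt_2 {k : Type*} [Field k] (n s : ℕ) (hs3 : 3 ≤ s) (hsn : s ≤ n)
    (ι : Type) (hι : ι = ({p : Fin (n + 1) × Fin (n + 1) // p.1 < p.2 ∧ (p.2 : ℕ) ≤ s - 1} ⊕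
      {i : Fin (n + 1) // s ≤ (i : ℕ)}))
    (g : ι → MvPolynomial (Fin (n + 1)) k)
    (hg : g = hι ▸ (Sum.elim (fun p => X p.1.1 * X p.1.2) (fun i => X i.1)))
    (J I : Ideal (MvPolynomial (Fin (n + 1)) k))
    (hJ : J = Ideal.span (Set.range g))
    (Θ : Matrix ι (Fin (n + 1)) (MvPolynomial (Fin (n + 1)) k))
    (hΘ : Θ = fun i j => pderiv j (g i))
    (hI : I = J ⊔ Ideal.span {f | ∃ i : Fin (n + 1), (i : ℕ) < s ∧ f = X i ^ (s - 1)}) :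
    I = J ⊔ minorsIdeal Θ n ∧
    ∀ t : ℕ, 2 ≤ t → J ⊓ I ^ t ≤ J * I ^ (t - 1) := by
  subst hι hg hJ hΘ hI
  refine ⟨CoordinatePoints.jacobianIdeal_eq_sup_minorsIdeal (by omega) (by omega),
    fun t ht => ?_⟩
  obtain ⟨t, rfl⟩ : ∃ r, t = r + 1 := ⟨t - 1, by omega⟩
  exact CoordinatePoints.inf_jacobianIdeal_pow_succ_le hs3 t
end

section
/- Let J = (x_i·x_j : 0 ≤ i < j ≤ s-1) + (x_s,...,x_n) ⊂ k[x_0,...,x_n] with 3 ≤ s ≤ n, and let Θ be the Jacobian matrix of these generators. Then the ideal of n-minors of Θ satisfies I_n(Θ) = (x_0, x_1, ..., x_{s-1})^{s-1}. -/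
/-!
Each entry of a quadric row of `Θ` lies in `𝔪 = (x₀, …, x_{s-1})`, and a minor with distinct
rows takes at most `n + 1 - s` of its `n` rows among the linear ones, so every term of its
Leibniz expansion lies in `𝔪 ^ (s - 1)`.

Conversely, every monomial `x_{w₁} ⋯ x_{w_{s-1}}` in the first `s` variables is the product of
the parents in a spanning tree of the complete graph on those `s` vertices: a vertex that is
not among the `wᵢ` can be taken as a leaf, and the rest is built recursively. The rows of the
edges `x_p x_c` of this tree, with the columns of the children, together with the linear rows,
form a block triangular minor whose diagonal consists of the parents.
-/

open MvPolynomial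

-- Edge `t` of the tree joins the parent `w (π t)` to the child `c t`.
theorem exists_tree_with_parents {V : Type*} [Fintype V] [DecidableEq V] (m : ℕ)
    (hV : Fintype.card V = m + 1) (w : Fin m → V) :
    ∃ (π : Equiv.Perm (Fin m)) (c : Fin m → V),
      Function.Injective c ∧ ∀ t t', t' ≤ t → w (π t) ≠ c t' := by
  induction m generalizing V with
  | zero => exact ⟨1, Fin.elim0, fun a => a.elim0, fun t => t.elim0⟩
  | succ m ih =>
    obtain ⟨u, hu⟩ : ∃ u, u ∉ Set.range w := by
      by_contra! hw
      have := Fintype.card_le_of_surjective w hw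
      simp only [hV, Fintype.card_fin] at this
      omega
    have hV' : Fintype.card {v // v ≠ u} = m + 1 := by
      simp [Fintype.card_subtype_compl, hV]
    obtain ⟨π, c, hc, hπc⟩ := ih hV' fun t => ⟨w t.succ, fun h => hu ⟨_, h⟩⟩
    refine ⟨Equiv.Perm.decomposeFin.symm (0, π), Fin.cons u fun t => c t, ?_, ?_⟩
    · exact Fin.cons_injective_iff.mpr
        ⟨fun ⟨t, ht⟩ => (c t).2 ht, Subtype.val_injective.comp hc⟩
    · intro t t' htt'
      induction t' using Fin.cases with
      | zero => exact fun h => hu ⟨_, h⟩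
      | succ j' =>
        induction t using Fin.cases with
        | zero => exact absurd htt' (Fin.succ_pos j').not_ge
        | succ j =>
          simpa [Subtype.ext_iff] using hπc j j' (Fin.succ_le_succ_iff.mp htt')

theorem det_pderiv_edges {σ R : Type*} [CommRing R] {m : ℕ} (p c : Fin m → σ)
    (hc : Function.Injective c) (hpc : ∀ t t', t' ≤ t → p t ≠ c t') :
    (Matrix.of fun t t' => pderiv (c t') (X (p t) * X (c t) : MvPolynomial σ R)).det =
      ∏ t, X (p t) := by
  classical
  rw [Matrix.det_of_isUpperTriangular]
  · refine Finset.prod_congr rfl fun t _ => ?_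
    simp [hpc t t le_rfl]
  · intro t t' htt'
    have hne : t ≠ t' := htt'.ne'
    simp [Pi.single_apply, hpc t t' htt'.le, hc.eq_iff, hne]

section Minors

variable {R ι κ : Type*} [CommRing R]

theorem det_submatrix_mem_minorsIdeal {ι' : Type*} [Fintype ι'] [DecidableEq ι']
    (M : Matrix ι κ R) (f : ι' → ι) (g : ι' → κ) {u : ℕ} (hu : Fintype.card ι' = u) :
    (M.submatrix f g).det ∈ minorsIdeal M u := by
  let e := (Fintype.equivFinOfCardEq hu).symm
  rw [← Matrix.det_submatrix_equiv_self e, Matrix.submatrix_submatrix]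
  exact Ideal.subset_span ⟨_, _, rfl⟩

theorem prod_mem_pow_of_injective {α ι₁ ι₂ : Type*} [Fintype α] [Fintype ι₂] {I : Ideal R}
    {k : ℕ} (x : α → R) (r : α → ι₁ ⊕ ι₂) (hr : Function.Injective r)
    (hx : ∀ a i, r a = Sum.inl i → x a ∈ I) (hk : Fintype.card ι₂ + k ≤ Fintype.card α) :
    ∏ a, x a ∈ I ^ k := by
  classical
  set T := Finset.univ.filter fun a => (r a).isLeft
  have hTc : Tᶜ.card ≤ Fintype.card ι₂ := by
    calc Tᶜ.card ≤ (Finset.univ.map ⟨Sum.inr, Sum.inr_injective⟩ : Finset (ι₁ ⊕ ι₂)).card :=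
          Finset.card_le_card_of_injOn r (fun a ha => ?_) hr.injOn
      _ = Fintype.card ι₂ := by simp
    obtain ⟨j, hj⟩ := Sum.isRight_iff.mp (by simpa [T] using ha)
    simp [hj]
  have hT : k ≤ T.card := by
    have := T.card_add_card_compl
    omega
  rw [← T.prod_mul_prod_compl]
  refine Ideal.mul_mem_right _ _ (Ideal.pow_le_pow_right hT ?_)
  rw [← Finset.prod_const]
  refine Ideal.prod_mem_prod fun a ha => ?_
  obtain ⟨i, hi⟩ := Sum.isLeft_iff.mp (Finset.mem_filter.mp ha).2
  exact hx a i hi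

theorem minorsIdeal_le_pow {ι₁ ι₂ : Type*} [Fintype ι₂] (M : Matrix (ι₁ ⊕ ι₂) κ R)
    {I : Ideal R} {u k : ℕ} (hI : ∀ i j, M (Sum.inl i) j ∈ I)
    (hk : Fintype.card ι₂ + k ≤ u) : minorsIdeal M u ≤ I ^ k := by
  rw [minorsIdeal, Ideal.span_le]
  rintro _ ⟨f, g, rfl⟩
  by_cases hf : Function.Injective f
  · rw [SetLike.mem_coe, Matrix.det_apply]
    refine Ideal.sum_mem _ fun σ _ => ?_
    rw [Units.smul_def, zsmul_eq_mul]
    refine Ideal.mul_mem_left _ _ (prod_mem_pow_of_injective _ _ (hf.comp σ.injective)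
      (fun a i hi => ?_) (by simpa using hk))
    simp only [Function.comp_apply] at hi
    simpa [hi] using hI i (g a)
  · obtain ⟨i, j, hij, hne⟩ := Function.not_injective_iff.mp hf
    rw [SetLike.mem_coe, Matrix.det_zero_of_row_eq hne (by ext; simp [hij])]
    exact Ideal.zero_mem _

end Minors

noncomputable def jacobian {ι σ R : Type*} [CommSemiring R] (g : ι → MvPolynomial σ R) :
    Matrix ι σ (MvPolynomial σ R) :=
  Matrix.of fun i j => pderiv j (g i)

abbrev QuadricIndex (n s : ℕ) :=
  {p : Fin (n + 1) × Fin (n + 1) // p.1 < p.2 ∧ (p.2 : ℕ) ≤ s - 1}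

abbrev VarIndex (n s : ℕ) := {i : Fin (n + 1) // s ≤ (i : ℕ)}

noncomputable def generators (k : Type*) [CommSemiring k] (n s : ℕ) :
    QuadricIndex n s ⊕ VarIndex n s → MvPolynomial (Fin (n + 1)) k :=
  Sum.elim (fun p => X p.1.1 * X p.1.2) (fun i => X i.1)

noncomputable def firstVarsIdeal (k : Type*) [CommSemiring k] (n s : ℕ) :
    Ideal (MvPolynomial (Fin (n + 1)) k) :=
  Ideal.span {f | ∃ i : Fin (n + 1), (i : ℕ) < s ∧ f = X i}

section Jacobian

variable {k : Type*} [CommRing k] {n s : ℕ}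

theorem card_varIndex : Fintype.card (VarIndex n s) = n + 1 - s := by
  rw [Fintype.card_congr (Equiv.subtypeEquivRight fun i => not_lt.symm),
    Fintype.card_subtype_compl, Fintype.card_subtype, Fin.card_filter_val_lt, Fintype.card_fin]
  omega

theorem card_subtype_val_lt (hsn : s ≤ n + 1) :
    Fintype.card {i : Fin (n + 1) // (i : ℕ) < s} = s := by
  rw [Fintype.card_subtype, Fin.card_filter_val_lt]
  omega

theorem exists_quadricIndex {a b : Fin (n + 1)} (hab : a ≠ b) (ha : (a : ℕ) < s)
    (hb : (b : ℕ) < s) :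
    ∃ e : QuadricIndex n s, (X e.1.1 * X e.1.2 : MvPolynomial (Fin (n + 1)) k) = X a * X b := by
  rcases lt_or_gt_of_ne hab with h | h
  · exact ⟨⟨(a, b), h, show (b : ℕ) ≤ s - 1 by omega⟩, rfl⟩
  · exact ⟨⟨(b, a), h, show (a : ℕ) ≤ s - 1 by omega⟩, mul_comm _ _⟩

theorem minorsIdeal_jacobian_le (hs : 0 < s) (hsn : s ≤ n + 1) :
    minorsIdeal (jacobian (generators k n s)) n ≤ firstVarsIdeal k n s ^ (s - 1) := by
  refine minorsIdeal_le_pow _ (fun e j => ?_) (by rw [card_varIndex]; omega)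
  have hmem : ∀ i : Fin (n + 1), (i : ℕ) < s → X i ∈ firstVarsIdeal k n s :=
    fun i hi => Ideal.subset_span ⟨i, hi, rfl⟩
  obtain ⟨⟨a, b⟩, hab, hb⟩ := e
  dsimp only at hab hb
  rw [Fin.lt_def] at hab
  show pderiv j (X a * X b) ∈ _
  rw [Derivation.leibniz, smul_eq_mul, smul_eq_mul]
  exact add_mem (Ideal.mul_mem_right _ _ (hmem a (by omega)))
    (Ideal.mul_mem_right _ _ (hmem b (by omega)))

theorem prod_X_mem_minorsIdeal_jacobian (hs : 0 < s) (hsn : s ≤ n + 1)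
    (w : Fin (s - 1) → Fin (n + 1)) (hw : ∀ t, (w t : ℕ) < s) :
    ∏ t, X (w t) ∈ minorsIdeal (jacobian (generators k n s)) n := by
  obtain ⟨π, c, hc, hπc⟩ := exists_tree_with_parents (s - 1)
    (by rw [card_subtype_val_lt hsn]; omega)
    fun t => (⟨w t, hw t⟩ : {i : Fin (n + 1) // (i : ℕ) < s})
  have hne : ∀ t t', t' ≤ t → w (π t) ≠ (c t').1 :=
    fun t t' h he => hπc t t' h (Subtype.ext he)
  choose e he using fun t => exists_quadricIndex (k := k) (hne t t le_rfl) (hw (π t)) (c t).2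
  set M := (jacobian (generators k n s)).submatrix (Sum.map e id)
    (Sum.elim (fun t => (c t).1) (Subtype.val : VarIndex n s → Fin (n + 1))) with hM
  have h11 : M.toBlocks₁₁ =
      Matrix.of fun t t' => pderiv (c t').1 (X (w (π t)) * X (c t).1) := by
    ext t t'
    simp [hM, Matrix.toBlocks₁₁, jacobian, generators, he]
  have h21 : M.toBlocks₂₁ = 0 := by
    ext l t
    have : l.1 ≠ (c t).1 := fun h => by have := (c t).2; have := l.2; omega
    simp [hM, Matrix.toBlocks₂₁, jacobian, generators, Pi.single_apply, this]
  have h22 : M.toBlocks₂₂ = 1 := by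
    ext l l'
    simp [hM, Matrix.toBlocks₂₂, jacobian, generators, Pi.single_apply, Matrix.one_apply,
      Subtype.ext_iff]
  have hdet : M.det = ∏ t, X (w t) := by
    rw [← M.fromBlocks_toBlocks, h21, h22, h11, Matrix.det_fromBlocks_zero₂₁, Matrix.det_one,
      mul_one, det_pderiv_edges (fun t => w (π t)) (fun t => (c t).1)
        (Subtype.val_injective.comp hc) hne, Equiv.prod_comp π (fun t => X (w t))]
  rw [← hdet]
  exact det_submatrix_mem_minorsIdeal _ _ _ (by simp [card_varIndex]; omega)

theorem pow_le_minorsIdeal_jacobian (hs : 0 < s) (hsn : s ≤ n + 1) :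
    firstVarsIdeal k n s ^ (s - 1) ≤ minorsIdeal (jacobian (generators k n s)) n := by
  rw [firstVarsIdeal, Ideal.span, Submodule.span_pow, Submodule.span_le]
  rintro _ hd
  obtain ⟨f, rfl⟩ := Set.mem_pow.mp hd
  choose w hw hfw using fun t => (f t).2
  simpa [List.prod_ofFn, hfw] using prod_X_mem_minorsIdeal_jacobian hs hsn w hw

end Jacobian

/-- For the generators `xᵢxⱼ (0 ≤ i < j ≤ s-1)` and `x_s,…,xₙ` (with `3 ≤ s ≤ n`),
the ideal of `n`-minors of the Jacobian matrix `Θ` satisfies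
`Iₙ(Θ) = (x₀,…,x_{s-1})^{s-1}`. -/
theorem stmt_3 {k : Type*} [Field k] (n s : ℕ) (hs3 : 3 ≤ s) (hsn : s ≤ n)
    (g : ({p : Fin (n + 1) × Fin (n + 1) // p.1 < p.2 ∧ (p.2 : ℕ) ≤ s - 1} ⊕
      {i : Fin (n + 1) // s ≤ (i : ℕ)}) → MvPolynomial (Fin (n + 1)) k)
    (hg : g = Sum.elim (fun p => X p.1.1 * X p.1.2) (fun i => X i.1))
    (Θ : Matrix ({p : Fin (n + 1) × Fin (n + 1) // p.1 < p.2 ∧ (p.2 : ℕ) ≤ s - 1} ⊕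
      {i : Fin (n + 1) // s ≤ (i : ℕ)}) (Fin (n + 1)) (MvPolynomial (Fin (n + 1)) k))
    (hΘ : Θ = fun i j => pderiv j (g i)) :
    minorsIdeal Θ n =
      (Ideal.span {f | ∃ i : Fin (n + 1), (i : ℕ) < s ∧ f = X i}) ^ (s - 1) := by
  subst hg hΘ
  exact le_antisymm (minorsIdeal_jacobian_le (by omega) (by omega))
    (pow_le_minorsIdeal_jacobian (by omega) (by omega))
end

section
/- The ideal J = (x_0, x_1·x_2·(x_1 - x_2)) ⊂ k[x_0, x_1, x_2] of the three collinear points (0:1:0), (0:0:1), (0:1:1) in P^2 and its Jacobian ideal I = (J, I_2(Θ)) satisfy: x_1·x_2^3·(x_1 - x_2) ∈ J ∩ I^2 but x_1·x_2^3·(x_1 - x_2) ∉ J·I; in particular the pair (J,I) is not Aluffi torsion-free. -/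
/-!
Write `f = x₁x₂(x₁ - x₂)` and `f₁, f₂` for its partial derivatives. The Jacobian matrix has rows
`(1, 0, 0)` and `(0, f₁, f₂)`, so its 2-minors generate `(f₁, f₂)`, and Euler's relation
`3f = x₁f₁ + x₂f₂` gives `I = (x₀, f₁, f₂)`. The element `e = x₂²f` lies in `J`, and
`9e = x₁f₁² + (2x₁ - 5x₂)f₁f₂ - 4x₂f₂²` puts it in `I²`.

On the other hand `J·I ⊆ (x₀) + f·(f₁, f₂)`. Setting `x₀ = 0` and cancelling `f`, `e ∈ J·I` would
give `x₂² ∈ (f₁, f₂)`. As `f₁`, `f₂`, `x₂²` are quadratic forms, `x₂²` would then be a `k`-linear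
combination of `f₁` and `f₂`, which is refuted by evaluating at `(x₁, x₂) = (1, 0)` and `(1, 2)`.
-/

open MvPolynomial

namespace MvPolynomial

variable {σ R : Type*} [CommSemiring R]

theorem homogeneousComponent_mul_of_isHomogeneous {s : MvPolynomial σ R} {n : ℕ}
    (hs : s.IsHomogeneous n) (q : MvPolynomial σ R) :
    homogeneousComponent n (q * s) = C (coeff 0 q) * s := by
  classical
  induction q using MvPolynomial.induction_on' with
  | monomial d c =>
    by_cases hd : d = 0
    · subst hd
      rw [monomial_zero', coeff_C, if_pos rfl, homogeneousComponent_C_mul,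
        homogeneousComponent_eq_self hs]
    · have hdeg : d.degree + n ≠ n := by simpa [Finsupp.degree_eq_zero_iff] using hd
      rw [homogeneousComponent_of_mem ((isHomogeneous_monomial c rfl).mul hs), if_neg hdeg.symm,
        coeff_monomial, if_neg hd, C_0, zero_mul]
  | add p q hp hq => rw [add_mul, map_add, hp, hq, coeff_add, C_add, add_mul]

theorem exists_eq_C_mul_add_C_mul_of_mem_span_pair {p a b : MvPolynomial σ R} {n : ℕ}
    (hp : p.IsHomogeneous n) (ha : a.IsHomogeneous n) (hb : b.IsHomogeneous n)
    (h : p ∈ Ideal.span {a, b}) : ∃ c d : R, p = C c * a + C d * b := by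
  obtain ⟨u, v, rfl⟩ := Ideal.mem_span_pair.mp h
  refine ⟨coeff 0 u, coeff 0 v, ?_⟩
  rw [← homogeneousComponent_eq_self hp, map_add, homogeneousComponent_mul_of_isHomogeneous ha,
    homogeneousComponent_mul_of_isHomogeneous hb]

theorem mem_of_natCast_mul_mem {k : Type*} [Field k] [CharZero k] {I : Ideal (MvPolynomial σ k)}
    {n : ℕ} (hn : n ≠ 0) {p : MvPolynomial σ k} (h : (n : MvPolynomial σ k) * p ∈ I) : p ∈ I := by
  have hunit : IsUnit (n : MvPolynomial σ k) := by
    rw [← map_natCast C]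
    exact (isUnit_iff_ne_zero.mpr (Nat.cast_ne_zero.mpr hn)).map C
  exact (Ideal.unit_mul_mem_iff_mem I hunit).mp h

end MvPolynomial

theorem minorsIdeal_two_le_span_row {R : Type*} [CommRing R] {κ : Type*}
    (M : Matrix (Fin 2) κ R) : minorsIdeal M 2 ≤ Ideal.span (Set.range (M 1)) := by
  rw [minorsIdeal, Ideal.span_le]
  rintro _ ⟨r, c, rfl⟩
  have hrow (j : κ) : M 1 j ∈ Ideal.span (Set.range (M 1)) := Ideal.subset_span ⟨j, rfl⟩
  rw [SetLike.mem_coe, Matrix.det_fin_two]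
  simp only [Matrix.submatrix_apply]
  generalize r 0 = a, r 1 = b
  fin_cases a <;> fin_cases b
  · rw [mul_comm, sub_self]; exact zero_mem _
  · exact sub_mem (Ideal.mul_mem_left _ _ (hrow _)) (Ideal.mul_mem_left _ _ (hrow _))
  · exact sub_mem (Ideal.mul_mem_right _ _ (hrow _)) (Ideal.mul_mem_right _ _ (hrow _))
  · rw [mul_comm, sub_self]; exact zero_mem _

namespace CollinearPoints

variable {k : Type*} [Field k]

noncomputable def f : MvPolynomial (Fin 3) k := X 1 * X 2 * (X 1 - X 2)

noncomputable def f₁ : MvPolynomial (Fin 3) k := 2 * X 1 * X 2 - X 2 ^ 2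

noncomputable def f₂ : MvPolynomial (Fin 3) k := X 1 ^ 2 - 2 * X 1 * X 2

noncomputable def e : MvPolynomial (Fin 3) k := X 1 * X 2 ^ 3 * (X 1 - X 2)

theorem e_eq : (e : MvPolynomial (Fin 3) k) = X 2 ^ 2 * f := by
  rw [e, f]; ring

theorem jacobian_eq :
    (fun i j => pderiv j (![X 0, f] i) : Matrix (Fin 2) (Fin 3) (MvPolynomial (Fin 3) k)) =
      !![1, 0, 0; 0, f₁, f₂] := by
  ext i j : 2
  fin_cases i <;> fin_cases j <;> simp [f, f₁, f₂] <;> ring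

theorem minorsIdeal_jacobian :
    minorsIdeal !![(1 : MvPolynomial (Fin 3) k), 0, 0; 0, f₁, f₂] 2 = Ideal.span {f₁, f₂} := by
  apply le_antisymm
  · refine (minorsIdeal_two_le_span_row _).trans (Ideal.span_le.mpr ?_)
    rintro _ ⟨j, rfl⟩
    fin_cases j
    · exact zero_mem _
    · exact Ideal.subset_span (by simp)
    · exact Ideal.subset_span (by simp)
  · rw [Ideal.span_le, Set.insert_subset_iff, Set.singleton_subset_iff]
    refine ⟨Ideal.subset_span ⟨![0, 1], ![0, 1], ?_⟩, Ideal.subset_span ⟨![0, 1], ![0, 2], ?_⟩⟩ <;>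
      (rw [Matrix.det_fin_two]; simp)

theorem isHomogeneous_f₁ : (f₁ : MvPolynomial (Fin 3) k).IsHomogeneous 2 := by
  rw [f₁, ← map_ofNat C 2]
  exact ((isHomogeneous_C_mul_X _ 1).mul (isHomogeneous_X _ 2)).sub (isHomogeneous_X_pow 2 2)

theorem isHomogeneous_f₂ : (f₂ : MvPolynomial (Fin 3) k).IsHomogeneous 2 := by
  rw [f₂, ← map_ofNat C 2]
  exact (isHomogeneous_X_pow 1 2).sub ((isHomogeneous_C_mul_X _ 1).mul (isHomogeneous_X _ 2))

theorem f_ne_zero : (f : MvPolynomial (Fin 3) k) ≠ 0 :=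
  mul_ne_zero (mul_ne_zero (X_ne_zero 1) (X_ne_zero 2))
    (sub_ne_zero.mpr (X_injective.ne (by decide)))

variable [CharZero k]

theorem f_mem_span : (f : MvPolynomial (Fin 3) k) ∈ Ideal.span {f₁, f₂} := by
  refine mem_of_natCast_mul_mem three_ne_zero (Ideal.mem_span_pair.mpr ⟨X 1, X 2, ?_⟩)
  rw [f, f₁, f₂]
  push_cast
  ring

theorem X_two_sq_notMem : (X 2 ^ 2 : MvPolynomial (Fin 3) k) ∉ Ideal.span {f₁, f₂} := by
  intro h
  obtain ⟨c, d, h⟩ := exists_eq_C_mul_add_C_mul_of_mem_span_pair (isHomogeneous_X_pow 2 2)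
    isHomogeneous_f₁ isHomogeneous_f₂ h
  have hd : d = 0 := by simpa [f₁, f₂] using (congrArg (eval ![0, 1, 0]) h).symm
  have h₂ := congrArg (eval ![0, 1, 2]) h
  simp [f₁, f₂, hd] at h₂
  norm_num at h₂

theorem e_mem_span_sq : (e : MvPolynomial (Fin 3) k) ∈ Ideal.span {f₁, f₂} ^ 2 := by
  have hf₁ : f₁ ∈ Ideal.span {(f₁ : MvPolynomial (Fin 3) k), f₂} := Ideal.subset_span (by simp)
  have hf₂ : f₂ ∈ Ideal.span {(f₁ : MvPolynomial (Fin 3) k), f₂} := Ideal.subset_span (by simp)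
  have h9 : ((9 : ℕ) : MvPolynomial (Fin 3) k) * e =
      X 1 * (f₁ * f₁) + (2 * X 1 - 5 * X 2) * (f₁ * f₂) - 4 * X 2 * (f₂ * f₂) := by
    rw [e, f₁, f₂]
    push_cast
    ring
  refine mem_of_natCast_mul_mem (n := 9) (by norm_num) ?_
  rw [h9, sq]
  exact sub_mem (add_mem (Ideal.mul_mem_left _ _ (Ideal.mul_mem_mul hf₁ hf₁))
    (Ideal.mul_mem_left _ _ (Ideal.mul_mem_mul hf₁ hf₂)))
    (Ideal.mul_mem_left _ _ (Ideal.mul_mem_mul hf₂ hf₂))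

theorem span_mul_sup_le :
    Ideal.span {X 0, f} * (Ideal.span {X 0, f} ⊔ Ideal.span {f₁, f₂}) ≤
      Ideal.span {(X 0 : MvPolynomial (Fin 3) k)} ⊔ Ideal.span {f} * Ideal.span {f₁, f₂} := by
  have hI : Ideal.span {X 0, f} ⊔ Ideal.span {f₁, f₂} ≤
      Ideal.span {(X 0 : MvPolynomial (Fin 3) k)} ⊔ Ideal.span {f₁, f₂} := by
    rw [Ideal.span_insert (X 0), sup_assoc]
    exact sup_le_sup_left (sup_le ((Ideal.span_singleton_le_iff_mem _).mpr f_mem_span) le_rfl) _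
  refine (Ideal.mul_mono_right hI).trans ?_
  rw [Ideal.span_insert (X 0), Ideal.sup_mul, Ideal.mul_sup, Ideal.mul_sup]
  exact sup_le (sup_le (Ideal.mul_le_right.trans le_sup_left) (Ideal.mul_le_left.trans le_sup_left))
    (sup_le (Ideal.mul_le_right.trans le_sup_left) le_sup_right)

theorem e_notMem :
    (e : MvPolynomial (Fin 3) k) ∉ Ideal.span {X 0} ⊔ Ideal.span {f} * Ideal.span {f₁, f₂} := by
  intro h
  obtain ⟨_, hy, _, hz, hyz⟩ := Submodule.mem_sup.mp h
  obtain ⟨p, rfl⟩ := Ideal.mem_span_singleton'.mp hy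
  obtain ⟨w, hw, rfl⟩ := Ideal.mem_span_singleton_mul.mp hz
  let φ : MvPolynomial (Fin 3) k →ₐ[k] MvPolynomial (Fin 3) k := aeval ![0, X 1, X 2]
  have hφw : φ w ∈ Ideal.span {f₁, f₂} := by
    have := Ideal.mem_map_of_mem φ hw
    rwa [Ideal.map_span, Set.image_pair, show φ f₁ = f₁ by simp [φ, f₁, map_ofNat],
      show φ f₂ = f₂ by simp [φ, f₂, map_ofNat]] at this
  have hφf : φ f = f := by simp [φ, f]
  have hφe : φ e = e := by simp [φ, e]
  have hφ := congrArg φ hyz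
  rw [map_add, map_mul, map_mul, show φ (X 0) = 0 by simp [φ], mul_zero, zero_add, hφf, hφe,
    e_eq, mul_comm (X 2 ^ 2)] at hφ
  exact X_two_sq_notMem (mul_left_cancel₀ f_ne_zero hφ ▸ hφw)

end CollinearPoints

open CollinearPoints

/-- For the ideal `J = (x₀, x₁x₂(x₁ - x₂))` of the three collinear points
`(0:1:0), (0:0:1), (0:1:1)` in `ℙ²` and its Jacobian ideal `I = (J, I₂(Θ))`, the element
`x₁x₂³(x₁-x₂)` lies in `J ∩ I²` but not in `J·I`; in particular `(J, I)` is not Aluffi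
torsion-free. -/
theorem stmt_4 {k : Type*} [Field k] [CharZero k]
    (g : Fin 2 → MvPolynomial (Fin 3) k)
    (hg : g = ![X 0, X 1 * X 2 * (X 1 - X 2)])
    (J I : Ideal (MvPolynomial (Fin 3) k))
    (hJ : J = Ideal.span (Set.range g))
    (Θ : Matrix (Fin 2) (Fin 3) (MvPolynomial (Fin 3) k))
    (hΘ : Θ = fun i j => pderiv j (g i))
    (hI : I = J ⊔ minorsIdeal Θ 2) :
    X 1 * X 2 ^ 3 * (X 1 - X 2) ∈ J ⊓ I ^ 2 ∧
    X 1 * X 2 ^ 3 * (X 1 - X 2) ∉ J * I := by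
  subst hg hΘ hI hJ
  rw [show X 1 * X 2 * (X 1 - X 2) = f from rfl, show X 1 * X 2 ^ 3 * (X 1 - X 2) = e from rfl,
    jacobian_eq, minorsIdeal_jacobian, Matrix.range_cons_cons_empty]
  refine ⟨⟨?_, Ideal.pow_right_mono le_sup_right 2 e_mem_span_sq⟩,
    fun h => e_notMem (span_mul_sup_le h)⟩
  rw [e_eq]
  exact Ideal.mul_mem_left _ _ (Ideal.subset_span (by simp))
end

section
/- Let J = (x·z - y·z, x·y - y·z) ⊂ k[x,y,z] be the ideal of the four points (1:0:0), (0:1:0), (0:0:1), (1:1:1) in P^2, and let I = (J, I_2(Θ)) be its Jacobian ideal, where Θ is the 2×3 Jacobian matrix of the generators. Then J ∩ I^2 is not contained in J·I; in particular the pair (J, I) is not Aluffi torsion-free. -/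
/-!
The witness is `H = y z² (y - z) = -yz·(xz - yz) + z²·(xy - yz) ∈ J`, and `4H` is a quadratic
expression in the generators of `I`, so `H ∈ J ∩ I²` once `2` is invertible. As `J·I` is generated
by forms of degree `4`, the degree-`4` component of any element of `J·I` is a `k`-linear
combination of these generators. The functional `Φ(q) = q(p₁) - 2 q(p₂) + q(p₃)`, for
`p₁ = (-1, 1, 0)`, `p₂ = (-1, -1, 0)`, `p₃ = (-1, -1, -2)`, kills all of them: `xz - yz` vanishes at
the three points, while `Φ((xy - yz)·t) = -Ψ(t)` for `Ψ(t) = t(p₁) + 2 t(p₂) + t(p₃)`, which kills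
every quadric generator of `I`. But `Φ(H) = -4`.
-/

open MvPolynomial Pointwise

namespace MvPolynomial

variable {σ R : Type*} [CommSemiring R]

theorem homogeneousComponent_mul_of_isHomogeneous_s9 {n : ℕ} {E : MvPolynomial σ R}
    (hE : E.IsHomogeneous n) (p : MvPolynomial σ R) :
    homogeneousComponent n (p * E) = constantCoeff p • E := by
  classical
  ext m
  rw [coeff_homogeneousComponent, coeff_smul, smul_eq_mul]
  split_ifs with hm
  · rw [coeff_mul, Finset.sum_eq_single (0, m)]
    · rfl
    · rintro ⟨a, b⟩ hab hne
      simp only [Finset.HasAntidiagonal.mem_antidiagonal] at hab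
      by_cases hb : b.degree = n
      · have ha : a = 0 := by
          rw [← Finsupp.degree_eq_zero_iff]
          have := congrArg Finsupp.degree hab
          rw [map_add] at this
          omega
        subst ha hab
        exact absurd (by rw [zero_add]) hne
      · rw [hE.coeff_eq_zero hb, mul_zero]
    · simp
  · rw [hE.coeff_eq_zero hm, mul_zero]

theorem homogeneousComponent_mem_span_of_mem_ideal_span {n : ℕ} {S : Set (MvPolynomial σ R)}
    (hS : ∀ s ∈ S, s.IsHomogeneous n) {q : MvPolynomial σ R} (hq : q ∈ Ideal.span S) :
    homogeneousComponent n q ∈ Submodule.span R S := by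
  obtain ⟨m, c, s, rfl⟩ := Submodule.mem_span_set'.mp hq
  rw [map_sum]
  refine Submodule.sum_mem _ fun i _ => ?_
  rw [smul_eq_mul, homogeneousComponent_mul_of_isHomogeneous_s9 (hS _ (s i).2)]
  exact Submodule.smul_mem _ _ (Submodule.subset_span (s i).2)

end MvPolynomial

theorem Matrix.isHomogeneous_det {σ R n : Type*} [CommRing R] [Fintype n] [DecidableEq n]
    {M : Matrix n n (MvPolynomial σ R)} {d : ℕ} (hM : ∀ i j, (M i j).IsHomogeneous d) :
    M.det.IsHomogeneous (Fintype.card n * d) := by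
  rw [Matrix.det_apply]
  refine IsHomogeneous.sum _ _ _ fun e _ => ?_
  have hprod : (∏ i, M (e i) i).IsHomogeneous (Fintype.card n * d) := by
    have := IsHomogeneous.prod Finset.univ _ (fun _ => d) fun i _ => hM (e i) i
    rwa [Finset.sum_const, smul_eq_mul, Finset.card_univ] at this
  rcases Int.units_eq_one_or (Equiv.Perm.sign e) with h | h <;> simp [h, hprod, hprod.neg]

namespace FourPoints

variable (k : Type*) [CommRing k]

noncomputable abbrev gens : Fin 2 → MvPolynomial (Fin 3) k :=
  ![X 0 * X 2 - X 1 * X 2, X 0 * X 1 - X 1 * X 2]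

noncomputable abbrev jacobian : Matrix (Fin 2) (Fin 3) (MvPolynomial (Fin 3) k) :=
  !![X 2, -X 2, X 0 - X 1; X 1, X 0 - X 2, -X 1]

noncomputable abbrev idealJ : Ideal (MvPolynomial (Fin 3) k) := Ideal.span (Set.range (gens k))

noncomputable abbrev jacobianIdeal : Ideal (MvPolynomial (Fin 3) k) :=
  idealJ k ⊔ minorsIdeal (jacobian k) 2

noncomputable abbrev witness : MvPolynomial (Fin 3) k := X 1 * X 2 ^ 2 * (X 1 - X 2)

noncomputable def phi : MvPolynomial (Fin 3) k →ₗ[k] k :=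
  (aeval ![(-1 : k), 1, 0]).toLinearMap - (2 : k) • (aeval ![(-1 : k), -1, 0]).toLinearMap
    + (aeval ![(-1 : k), -1, -2]).toLinearMap

noncomputable def psi : MvPolynomial (Fin 3) k →ₗ[k] k :=
  (aeval ![(-1 : k), 1, 0]).toLinearMap + (2 : k) • (aeval ![(-1 : k), -1, 0]).toLinearMap
    + (aeval ![(-1 : k), -1, -2]).toLinearMap

theorem phi_apply (q : MvPolynomial (Fin 3) k) :
    phi k q = aeval ![-1, 1, 0] q - 2 * aeval ![-1, -1, 0] q + aeval ![-1, -1, -2] q :=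
  rfl

theorem psi_apply (q : MvPolynomial (Fin 3) k) :
    psi k q = aeval ![-1, 1, 0] q + 2 * aeval ![-1, -1, 0] q + aeval ![-1, -1, -2] q :=
  rfl

theorem pderiv_gens : (fun i j => pderiv j (gens k i)) = jacobian k := by
  ext i j
  fin_cases i <;> fin_cases j <;> simp [pderiv_X]

theorem isHomogeneous_gens (i : Fin 2) : (gens k i).IsHomogeneous 2 := by
  have hXX (a b : Fin 3) : (X a * X b : MvPolynomial (Fin 3) k).IsHomogeneous 2 :=
    (isHomogeneous_X k a).mul (isHomogeneous_X k b)
  fin_cases i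
  · exact (hXX 0 2).sub (hXX 1 2)
  · exact (hXX 0 1).sub (hXX 1 2)

theorem isHomogeneous_det_jacobian_submatrix (f : Fin 2 → Fin 2) (c : Fin 2 → Fin 3) :
    (jacobian k |>.submatrix f c).det.IsHomogeneous 2 := by
  refine Matrix.isHomogeneous_det (d := 1) fun i j => ?_
  rw [Matrix.submatrix_apply, ← pderiv_gens]
  exact (isHomogeneous_gens k (f i)).pderiv

theorem isHomogeneous_witness : (witness k).IsHomogeneous 4 :=
  ((isHomogeneous_X k 1).mul (isHomogeneous_X_pow 2 2)).mul
    ((isHomogeneous_X k 1).sub (isHomogeneous_X k 2))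

theorem phi_gens_zero_mul (t : MvPolynomial (Fin 3) k) : phi k (gens k 0 * t) = 0 := by
  simp [phi_apply]

theorem phi_gens_one_mul (t : MvPolynomial (Fin 3) k) : phi k (gens k 1 * t) = -psi k t := by
  simp only [phi_apply, psi_apply, map_mul, map_sub, aeval_X, Matrix.cons_val]
  ring

theorem psi_gens (i : Fin 2) : psi k (gens k i) = 0 := by
  fin_cases i <;> simp [psi_apply]

theorem psi_det_jacobian_submatrix (f : Fin 2 → Fin 2) (c : Fin 2 → Fin 3) :
    psi k (jacobian k |>.submatrix f c).det = 0 := by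
  rw [Matrix.det_fin_two]
  simp only [Matrix.submatrix_apply]
  generalize f 0 = a, f 1 = b, c 0 = d, c 1 = e
  fin_cases a <;> fin_cases b <;> fin_cases d <;> fin_cases e <;>
    simp only [psi_apply, map_mul, map_sub, map_neg, aeval_X, Matrix.of_apply, Fin.isValue,
      Fin.zero_eta, Fin.mk_one, Fin.reduceFinMk, Matrix.cons_val] <;>
    ring

theorem phi_witness : phi k (witness k) = -4 := by
  simp only [phi_apply, map_mul, map_sub, map_pow, aeval_X, Matrix.cons_val]
  ring

theorem idealJ_mul_jacobianIdeal_eq_span :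
    idealJ k * jacobianIdeal k = Ideal.span (Set.range (gens k) * (Set.range (gens k) ∪
      {d | ∃ (f : Fin 2 → Fin 2) (c : Fin 2 → Fin 3), d = (jacobian k |>.submatrix f c).det})) := by
  rw [jacobianIdeal, idealJ, minorsIdeal, ← Ideal.span_union, Ideal.span_mul_span']

theorem phi_homogeneousComponent_eq_zero_of_mem {q : MvPolynomial (Fin 3) k}
    (hq : q ∈ idealJ k * jacobianIdeal k) : phi k (homogeneousComponent 4 q) = 0 := by
  rw [idealJ_mul_jacobianIdeal_eq_span] at hq
  refine Submodule.span_le (p := LinearMap.ker (phi k)) |>.mpr ?_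
    (homogeneousComponent_mem_span_of_mem_ideal_span ?_ hq)
  · rintro _ ⟨_, ⟨i, rfl⟩, t, ht, rfl⟩
    have hpsi : psi k t = 0 := by
      rcases ht with ⟨j, rfl⟩ | ⟨f, c, rfl⟩
      · exact psi_gens k j
      · exact psi_det_jacobian_submatrix k f c
    fin_cases i
    · exact phi_gens_zero_mul k t
    · exact (phi_gens_one_mul k t).trans (by rw [hpsi, neg_zero])
  · rintro _ ⟨_, ⟨i, rfl⟩, t, ht, rfl⟩
    refine (isHomogeneous_gens k i).mul (n := 2) ?_
    rcases ht with ⟨j, rfl⟩ | ⟨f, c, rfl⟩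
    · exact isHomogeneous_gens k j
    · exact isHomogeneous_det_jacobian_submatrix k f c

theorem witness_mem_idealJ : witness k ∈ idealJ k := by
  have h : witness k = -(X 1 * X 2) * gens k 0 + X 2 ^ 2 * gens k 1 := by
    simp only [witness, gens, Matrix.cons_val_zero, Matrix.cons_val_one]
    ring
  rw [h]
  exact add_mem (Ideal.mul_mem_left _ _ (Ideal.subset_span ⟨0, rfl⟩))
    (Ideal.mul_mem_left _ _ (Ideal.subset_span ⟨1, rfl⟩))

theorem witness_mem_jacobianIdeal_sq (h2 : IsUnit (2 : k)) : witness k ∈ jacobianIdeal k ^ 2 := by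
  set I := jacobianIdeal k
  have hgen (i : Fin 2) : gens k i ∈ I := Ideal.mem_sup_left (Ideal.subset_span ⟨i, rfl⟩)
  have hminor (c : Fin 2 → Fin 3) : (jacobian k |>.submatrix id c).det ∈ I :=
    Ideal.mem_sup_right (Ideal.subset_span ⟨id, c, rfl⟩)
  set m₀₁ := (jacobian k |>.submatrix id ![0, 1]).det
  set m₀₂ := (jacobian k |>.submatrix id ![0, 2]).det
  set m₁₂ := (jacobian k |>.submatrix id ![1, 2]).det
  have hcert : (4 : MvPolynomial (Fin 3) k) * witness k =
      gens k 0 * (m₀₂ - m₀₁ - m₁₂) + gens k 1 * (2 * (m₁₂ - m₀₁ - m₀₂))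
        + m₀₁ * m₁₂ + m₀₂ * (2 * m₁₂ - m₀₁) := by
    simp only [m₀₁, m₀₂, m₁₂, Matrix.det_fin_two, Matrix.submatrix_apply, id_eq, Matrix.of_apply,
      Matrix.cons_val]
    ring
  have h4 : IsUnit (4 : MvPolynomial (Fin 3) k) := by
    rw [← map_ofNat C 4, show (4 : k) = 2 * 2 by norm_num]
    exact (h2.mul h2).map C
  rw [← Ideal.unit_mul_mem_iff_mem _ h4, hcert, pow_two]
  have h₀₁ := hminor ![0, 1]
  have h₀₂ := hminor ![0, 2]
  have h₁₂ := hminor ![1, 2]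
  refine add_mem (add_mem (add_mem ?_ ?_) ?_) ?_
  · exact Ideal.mul_mem_mul (hgen 0) (sub_mem (sub_mem h₀₂ h₀₁) h₁₂)
  · exact Ideal.mul_mem_mul (hgen 1) (I.mul_mem_left 2 (sub_mem (sub_mem h₁₂ h₀₁) h₀₂))
  · exact Ideal.mul_mem_mul h₀₁ h₁₂
  · exact Ideal.mul_mem_mul h₀₂ (sub_mem (I.mul_mem_left 2 h₁₂) h₀₁)

end FourPoints

open FourPoints in
/-- For the ideal `J = (xz - yz, xy - yz)` of the four points
`(1:0:0), (0:1:0), (0:0:1), (1:1:1)` in `ℙ²` (here `x = X 0`, `y = X 1`, `z = X 2`)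
and its Jacobian ideal `I = (J, I₂(Θ))`, one has `J ∩ I² ⊄ J·I`; in particular the pair
`(J, I)` is not Aluffi torsion-free. -/
theorem stmt_9 {k : Type*} [Field k] [CharZero k]
    (g : Fin 2 → MvPolynomial (Fin 3) k)
    (hg : g = ![X 0 * X 2 - X 1 * X 2, X 0 * X 1 - X 1 * X 2])
    (J I : Ideal (MvPolynomial (Fin 3) k))
    (hJ : J = Ideal.span (Set.range g))
    (Θ : Matrix (Fin 2) (Fin 3) (MvPolynomial (Fin 3) k))
    (hΘ : Θ = fun i j => pderiv j (g i))
    (hI : I = J ⊔ minorsIdeal Θ 2) :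
    ¬ (J ⊓ I ^ 2 ≤ J * I) := by
  subst hg hJ hI
  obtain rfl : Θ = jacobian k := hΘ.trans (pderiv_gens k)
  intro hle
  have hmem := hle ⟨witness_mem_idealJ k, witness_mem_jacobianIdeal_sq k two_ne_zero.isUnit⟩
  have hphi := phi_homogeneousComponent_eq_zero_of_mem k hmem
  rw [homogeneousComponent_eq_self (isHomogeneous_witness k), phi_witness] at hphi
  norm_num at hphi
end

section
/- The ideal I = (xy - xz, xz - yz, xz + yz - z^2, -xy + y^2 - yz, -x^2 + xy + xz) ⊂ k[x,y,z] is (x,y,z)-primary, i.e., has height 3, and is minimally generated by 5 quadrics. -/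
/-!
Every generator has zero constant term, and each of `x³, y³, z³` is an explicit combination of
the generators, so the radical of `I` is the maximal ideal `(x, y, z)` and `I` is primary.

For minimality, every element of `I` vanishes to order two at the origin. On such polynomials
the Hessian at the origin satisfies `H(p f) = p(0) H(f)`, so `H(I)` is the `k`-span of the
Hessians of any set of ideal generators. The Hessians of the five quadrics are linearly
independent, so no four elements generate `I`.
-/

open MvPolynomial

namespace MvPolynomial

section CommRing

variable (σ R : Type*) [CommRing R]

/-- The polynomials with no constant and no linear terms (that is, `idealOfVars σ R ^ 2`),
described through partial derivatives so that membership is decided by `simp`. -/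
def orderTwoIdeal : Ideal (MvPolynomial σ R) where
  carrier := {f | constantCoeff f = 0 ∧ ∀ i, constantCoeff (pderiv i f) = 0}
  zero_mem' := by simp
  add_mem' := by
    rintro f g ⟨hf, hf'⟩ ⟨hg, hg'⟩
    exact ⟨by simp [hf, hg], fun i => by simp [hf' i, hg' i]⟩
  smul_mem' := by
    rintro p f ⟨hf, hf'⟩
    exact ⟨by simp [hf], fun i => by simp [hf, hf' i]⟩

noncomputable def hessianAtZero : MvPolynomial σ R →ₗ[R] Matrix σ σ R where
  toFun f := Matrix.of fun i j => constantCoeff (pderiv j (pderiv i f))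
  map_add' f g := by ext; simp
  map_smul' r f := by ext; simp

variable {σ R}

theorem hessianAtZero_mul_of_mem_orderTwoIdeal (p : MvPolynomial σ R) {f : MvPolynomial σ R}
    (hf : f ∈ orderTwoIdeal σ R) :
    hessianAtZero σ R (p * f) = constantCoeff p • hessianAtZero σ R f := by
  obtain ⟨h0, h1⟩ := hf
  ext i j
  simp [hessianAtZero, h0, h1]

theorem idealOfVars_eq_ker_constantCoeff :
    idealOfVars σ R = RingHom.ker (constantCoeff (σ := σ) (R := R)) := by
  ext f
  rw [← pow_one (idealOfVars σ R), mem_pow_idealOfVars_iff', RingHom.mem_ker]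
  simp [Finsupp.degree_eq_zero_iff, constantCoeff_eq]

theorem orderTwoIdeal_le_idealOfVars : orderTwoIdeal σ R ≤ idealOfVars σ R := by
  rw [idealOfVars_eq_ker_constantCoeff]
  exact fun f hf => hf.1

end CommRing

section Field

variable {σ k : Type*} [Field k]

theorem isMaximal_idealOfVars : (idealOfVars σ k).IsMaximal := by
  rw [idealOfVars_eq_ker_constantCoeff]
  exact RingHom.ker_isMaximal_of_surjective _ fun a => ⟨C a, constantCoeff_C σ a⟩

theorem radical_eq_idealOfVars {I : Ideal (MvPolynomial σ k)} (hle : I ≤ idealOfVars σ k)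
    (hX : ∀ i, X i ∈ I.radical) : I.radical = idealOfVars σ k :=
  le_antisymm (isMaximal_idealOfVars.isPrime.radical_le_iff.2 hle)
    (Ideal.span_le.2 (Set.range_subset_iff.2 hX))

theorem card_le_card_of_linearIndependent_hessianAtZero {s : Finset (MvPolynomial σ k)}
    (hs : Ideal.span (s : Set (MvPolynomial σ k)) ≤ orderTwoIdeal σ k)
    {ι : Type*} [Fintype ι] {g : ι → MvPolynomial σ k}
    (hg : ∀ j, g j ∈ Ideal.span (s : Set (MvPolynomial σ k)))
    (hind : LinearIndependent k (hessianAtZero σ k ∘ g)) : Fintype.card ι ≤ s.card := by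
  classical
  have hspan : ∀ f ∈ Ideal.span (s : Set (MvPolynomial σ k)), hessianAtZero σ k f ∈
      Submodule.span k (s.image (hessianAtZero σ k) : Set (Matrix σ σ k)) := by
    intro f hf
    induction hf using Submodule.span_induction with
    | mem x hx => exact Submodule.subset_span (by simpa using ⟨x, hx, rfl⟩)
    | zero => simp
    | add x y _ _ hx hy => simpa using add_mem hx hy
    | smul a x hx ih =>
      rw [smul_eq_mul, hessianAtZero_mul_of_mem_orderTwoIdeal a (hs hx)]
      exact Submodule.smul_mem _ _ ih
  calc Fintype.card ι ≤ (s.image (hessianAtZero σ k)).card := by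
        simpa using linearIndependent_le_span_aux' _ hind _
          (Set.range_subset_iff.2 fun j => hspan _ (hg j))
    _ ≤ s.card := Finset.card_image_le

end Field

end MvPolynomial

noncomputable def jacobianQuadrics (k : Type*) [CommRing k] : Fin 5 → MvPolynomial (Fin 3) k :=
  ![X 0 * X 1 - X 0 * X 2, X 0 * X 2 - X 1 * X 2, X 0 * X 2 + X 1 * X 2 - X 2 ^ 2,
    -(X 0 * X 1) + X 1 ^ 2 - X 1 * X 2, -(X 0 ^ 2) + X 0 * X 1 + X 0 * X 2]

section JacobianQuadrics

variable {k : Type*}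

section CommRing

variable [CommRing k]

theorem range_jacobianQuadrics : Set.range (jacobianQuadrics k) = {X 0 * X 1 - X 0 * X 2,
    X 0 * X 2 - X 1 * X 2, X 0 * X 2 + X 1 * X 2 - X 2 ^ 2, -(X 0 * X 1) + X 1 ^ 2 - X 1 * X 2,
    -(X 0 ^ 2) + X 0 * X 1 + X 0 * X 2} := by
  simp only [jacobianQuadrics, Matrix.range_cons, Matrix.range_empty, Set.union_empty,
    Set.singleton_union]

theorem span_jacobianQuadrics_le_orderTwoIdeal :
    Ideal.span (Set.range (jacobianQuadrics k)) ≤ orderTwoIdeal (Fin 3) k := by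
  refine Ideal.span_le.2 (Set.range_subset_iff.2 fun j => ?_)
  fin_cases j <;>
    exact ⟨by simp [jacobianQuadrics], fun i => by simp [jacobianQuadrics, pderiv_X]⟩

theorem X_pow_three_mem_span_jacobianQuadrics (i : Fin 3) :
    X i ^ 3 ∈ Ideal.span (Set.range (jacobianQuadrics k)) := by
  rw [Ideal.mem_span_range_iff_exists_fun]
  fin_cases i <;>
    [refine ⟨![X 0 - 2 * X 2, 0, 2 * X 0, 0, -X 0], ?_⟩;
     refine ⟨![X 1 - 2 * X 2, -(2 * X 0) - X 1, 2 * X 0, X 1, 0], ?_⟩;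
     refine ⟨![-(4 * X 2), -(2 * X 0) - X 2, 2 * X 0 - X 2, 0, 0], ?_⟩] <;>
    simp only [jacobianQuadrics, Fin.sum_univ_five, Matrix.cons_val_zero, Matrix.cons_val_one,
      Matrix.cons_val, Fin.zero_eta, Fin.mk_one, Fin.reduceFinMk, Fin.isValue] <;>
    ring

theorem span_X_zero_one_two_eq_idealOfVars :
    (Ideal.span {X 0, X 1, X 2} : Ideal (MvPolynomial (Fin 3) k)) = idealOfVars (Fin 3) k := by
  rw [idealOfVars]
  congr 1
  ext p
  simp [Fin.exists_fin_succ, eq_comm]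

end CommRing

theorem linearIndependent_hessianAtZero_jacobianQuadrics [Field k] [CharZero k] :
    LinearIndependent k (hessianAtZero (Fin 3) k ∘ jacobianQuadrics k) := by
  rw [Fintype.linearIndependent_iff]
  intro c hc
  have e00 := congrFun (congrFun hc 0) 0
  have e11 := congrFun (congrFun hc 1) 1
  have e22 := congrFun (congrFun hc 2) 2
  have e01 := congrFun (congrFun hc 0) 1
  have e02 := congrFun (congrFun hc 0) 2
  simp [Fin.sum_univ_five, jacobianQuadrics, hessianAtZero, pderiv_X, map_ofNat constantCoeff 2]
    at e00 e11 e22 e01 e02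
  have h0 : c 0 = 0 := by linear_combination e01 + e11 - e00
  have h1 : c 1 = 0 := by linear_combination e02 + h0 - e22 - e00
  intro j
  fin_cases j <;> assumption

end JacobianQuadrics

/-- The ideal
`I = (xy - xz, xz - yz, xz + yz - z², -xy + y² - yz, -x² + xy + xz) ⊂ k[x,y,z]`
is `(x,y,z)`-primary (its radical is the irrelevant maximal ideal, so it has height 3)
and it is minimally generated by 5 quadrics (no 4 elements generate it). -/
theorem stmt_10 {k : Type*} [Field k] [CharZero k]
    (I : Ideal (MvPolynomial (Fin 3) k))
    (hI : I = Ideal.span {X 0 * X 1 - X 0 * X 2, X 0 * X 2 - X 1 * X 2,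
      X 0 * X 2 + X 1 * X 2 - X 2 ^ 2, -(X 0 * X 1) + X 1 ^ 2 - X 1 * X 2,
      -(X 0 ^ 2) + X 0 * X 1 + X 0 * X 2}) :
    I.IsPrimary ∧
    I.radical = Ideal.span {X 0, X 1, X 2} ∧
    ¬ ∃ s : Finset (MvPolynomial (Fin 3) k), s.card ≤ 4 ∧ Ideal.span (s : Set _) = I := by
  rw [← range_jacobianQuadrics (k := k)] at hI
  subst hI
  have hrad : (Ideal.span (Set.range (jacobianQuadrics k))).radical = idealOfVars (Fin 3) k :=
    radical_eq_idealOfVars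
      (span_jacobianQuadrics_le_orderTwoIdeal.trans orderTwoIdeal_le_idealOfVars)
      fun i => ⟨3, X_pow_three_mem_span_jacobianQuadrics i⟩
  refine ⟨Ideal.isPrimary_of_isMaximal_radical (hrad ▸ isMaximal_idealOfVars),
    hrad.trans span_X_zero_one_two_eq_idealOfVars.symm, ?_⟩
  rintro ⟨s, hcard, hspan⟩
  have h5 := card_le_card_of_linearIndependent_hessianAtZero
    (hspan ▸ span_jacobianQuadrics_le_orderTwoIdeal)
    (fun j => hspan ▸ Ideal.subset_span (Set.mem_range_self j))
    linearIndependent_hessianAtZero_jacobianQuadrics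
  rw [Fintype.card_fin] at h5
  omega
end

section
/- Let n ≥ 3 and let J' ⊂ k[x_0,...,x_n] be the ideal generated by {x_i·x_j - x_{n-2}·x_{n-1} : 0 ≤ i < j ≤ n-1} ∪ {x_i·x_n : 0 ≤ i ≤ n-1}. Then J' equals the defining ideal of the n+2 points of P^n consisting of the coordinate points e_0,...,e_{n-1} of the hyperplane x_n = 0, the point [1:1:...:1:0], and the point [0:...:0:1]. -/
open MvPolynomial

/-- The ideal of a point of `ℙⁿ` with coordinate vector `p`: the ideal generated by the linear
forms vanishing at `p`. -/
noncomputable def pointIdeal {k : Type*} [Field k] {n : ℕ} (p : Fin (n + 1) → k) :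
    Ideal (MvPolynomial (Fin (n + 1)) k) :=
  Ideal.span {ℓ | ℓ.IsHomogeneous 1 ∧ eval p ℓ = 0}

/-!
Write `w = x_{n-2} x_{n-1}`. Every polynomial splits into its constant term, its axis parts (the
terms that are powers of a single variable `xᵢ`, cut out by the substitution `xⱼ ↦ δᵢⱼ xᵢ`) and
its mixed part. Modulo `J'` a mixed monomial either contains some `xᵢ xₙ`, hence lies in `J'`, or
is congruent to `w x_{n-1}^{d-2}`: the quadrics identify every product of two distinct
hyperplane variables with `w`, so `w xₗ ≡ w x_{n-1}` for every hyperplane variable `xₗ`.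
A polynomial vanishing at the coordinate points has no axis parts and no constant term, so it is
congruent to `w g(x_{n-1})`; vanishing at `[1:…:1:0]` then gives `x² g(x) = 0`, i.e. `g = 0`.
-/

namespace MvPolynomial

variable {σ k : Type*} [CommRing k]

theorem IsHomogeneous.aeval_C_mul_X {φ : MvPolynomial σ k} {m : ℕ} (hφ : φ.IsHomogeneous m)
    (p : σ → k) (i : σ) :
    MvPolynomial.aeval (fun j => C (p j) * X i) φ = C (eval p φ) * X i ^ m := by
  conv_lhs => rw [φ.as_sum]
  conv_rhs => rw [φ.as_sum]
  simp only [map_sum, Finset.sum_mul]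
  refine Finset.sum_congr rfl fun d hd => ?_
  have hdeg : d.degree = m := by
    rw [Finsupp.degree_eq_weight_one]; exact hφ (mem_support_iff.mp hd)
  rw [aeval_monomial, eval_monomial, ← hdeg, Finsupp.degree_apply, Finsupp.prod, Finsupp.prod,
    ← Finset.prod_pow_eq_pow_sum]
  simp only [mul_pow, Finset.prod_mul_distrib, algebraMap_eq, map_mul, map_prod, map_pow]
  ring

theorem sub_aeval_mem {I : Ideal (MvPolynomial σ k)} {g : σ → MvPolynomial σ k}
    (hg : ∀ j, X j - g j ∈ I) (f : MvPolynomial σ k) : f - aeval g f ∈ I := by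
  rw [← Ideal.Quotient.eq]
  have : (Ideal.Quotient.mkₐ k I).comp (aeval g) = Ideal.Quotient.mkₐ k I :=
    algHom_ext fun j => by simpa [Ideal.Quotient.eq] using (I.neg_mem_iff.mpr (hg j))
  exact (AlgHom.congr_fun this f).symm

theorem exists_monomial_eq_X_mul_X_mul {u : σ →₀ ℕ} {a b : σ} (hab : a ≠ b)
    (ha : a ∈ u.support) (hb : b ∈ u.support) (c : k) :
    ∃ r, monomial u c = X a * X b * r := by
  obtain ⟨u₁, rfl⟩ := exists_add_of_le
    (Finsupp.single_le_iff.mpr (Nat.one_le_iff_ne_zero.mpr (Finsupp.mem_support_iff.mp ha)))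
  have hb₁ : u₁ b ≠ 0 := by simpa [Finsupp.single_apply, hab] using hb
  obtain ⟨u₂, rfl⟩ := exists_add_of_le
    (Finsupp.single_le_iff.mpr (Nat.one_le_iff_ne_zero.mpr hb₁))
  exact ⟨monomial u₂ c, by rw [monomial_single_add, monomial_single_add]; ring⟩

variable [DecidableEq σ]

noncomputable def axisPart (i : σ) : MvPolynomial σ k →ₐ[k] MvPolynomial σ k :=
  aeval (Pi.single i (X i))

theorem axisPart_monomial (i : σ) (u : σ →₀ ℕ) (c : k) :
    axisPart i (monomial u c) = if u.support ⊆ {i} then monomial u c else 0 := by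
  rw [axisPart, aeval_monomial]
  split_ifs with h
  · rw [Finsupp.support_subset_singleton.mp h, Finsupp.prod_single_index (by simp),
      Pi.single_eq_same, ← C_mul_X_pow_eq_monomial, algebraMap_eq]
  · obtain ⟨b, hb, hbi⟩ := Finset.not_subset.mp h
    rw [Finsupp.prod, Finset.prod_eq_zero hb, mul_zero]
    rw [Pi.single_eq_of_ne (Finset.mem_singleton.not.mp hbi),
      zero_pow (Finsupp.mem_support_iff.mp hb)]

theorem constantCoeff_axisPart (i : σ) (f : MvPolynomial σ k) :
    constantCoeff (axisPart i f) = constantCoeff f := by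
  have : (fun j => constantCoeff ((Pi.single i (X i) : σ → MvPolynomial σ k) j)) = 0 := by
    ext j; rcases eq_or_ne j i with rfl | h <;> simp [*]
  rw [axisPart, map_aeval]
  simp [this]

variable [Fintype σ]

/-- The sum of the terms of `f` that involve at least two variables. -/
noncomputable def mixedPart (f : MvPolynomial σ k) : MvPolynomial σ k :=
  f - C (constantCoeff f) - ∑ i, (axisPart i f - C (constantCoeff f))

theorem mixedPart_add (f g : MvPolynomial σ k) :
    mixedPart (f + g) = mixedPart f + mixedPart g := by
  simp only [mixedPart, map_add, add_sub_add_comm, Finset.sum_add_distrib]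

theorem mixedPart_monomial_of_support_subset {u : σ →₀ ℕ} {i : σ} (h : u.support ⊆ {i})
    (c : k) : mixedPart (monomial u c) = 0 := by
  rcases eq_or_ne u 0 with rfl | hu
  · simp [mixedPart]
  · have hsupp : u.support = {i} := (Finset.subset_singleton_iff.mp h).resolve_left
      (Finsupp.support_eq_empty.not.mpr hu)
    have : ∀ j, axisPart j (monomial u c) = if j = i then monomial u c else 0 := by
      intro j; simp [axisPart_monomial, hsupp, eq_comm]
    simp [mixedPart, constantCoeff_monomial, hu, this]

theorem mixedPart_monomial_of_mem_support {u : σ →₀ ℕ} {a b : σ} (hab : a ≠ b)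
    (ha : a ∈ u.support) (hb : b ∈ u.support) (c : k) :
    mixedPart (monomial u c) = monomial u c := by
  have hu : u ≠ 0 := by rintro rfl; simp at ha
  have : ∀ j, ¬u.support ⊆ {j} := fun j h => hab <|
    (Finset.mem_singleton.mp (h ha)).trans (Finset.mem_singleton.mp (h hb)).symm
  simp [mixedPart, axisPart_monomial, constantCoeff_monomial, hu, this]

theorem mixedPart_eq_self_of_forall_axisPart_eq_zero [Nonempty σ] {f : MvPolynomial σ k}
    (hf : ∀ i, axisPart i f = 0) : mixedPart f = f := by
  obtain ⟨i⟩ := ‹Nonempty σ›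
  have hc : constantCoeff f = 0 := by rw [← constantCoeff_axisPart i, hf, map_zero]
  simp [mixedPart, hf, hc]

end MvPolynomial

section Quadrics

variable {σ k : Type*} [CommRing k] {J : Ideal (MvPolynomial σ k)} {p q z : σ}

structure ContainsQuadrics (J : Ideal (MvPolynomial σ k)) (p q z : σ) : Prop where
  X_mul_X_sub_mem : ∀ a b, a ≠ b → a ≠ z → b ≠ z → X a * X b - X p * X q ∈ J
  X_mul_X_mem : ∀ a, a ≠ z → X a * X z ∈ J

namespace ContainsQuadrics

variable [DecidableEq σ]

/-- The third variable `o` is essential: without it `x_p² x_q ≢ x_p x_q²`. -/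
theorem X_mul_X_mul_sub_mem (hJ : ContainsQuadrics J p q z) (hpz : p ≠ z) (hqz : q ≠ z)
    {o : σ} (hop : o ≠ p) (hoq : o ≠ q) (hoz : o ≠ z) (l : σ) :
    X p * X q * (X l - if l = z then 0 else X q) ∈ J := by
  by_cases hlz : l = z
  · rw [if_pos hlz, sub_zero, hlz, mul_comm (X p), mul_assoc]
    exact J.mul_mem_left _ (hJ.X_mul_X_mem p hpz)
  rw [if_neg hlz]
  by_cases hlp : l = p
  · subst hlp
    have key : (X l * X q * (X l - X q) : MvPolynomial σ k) =
        (X o * X l - X l * X q) * X q - X l * (X o * X q - X l * X q) := by ring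
    rw [key]
    exact sub_mem (J.mul_mem_right _ (hJ.X_mul_X_sub_mem o l hop hoz hpz))
      (J.mul_mem_left _ (hJ.X_mul_X_sub_mem o q hoq hoz hqz))
  · have key : (X p * X q * (X l - X q) : MvPolynomial σ k) =
        X q * (X l * X p - X p * X q) := by ring
    rw [key]
    exact J.mul_mem_left _ (hJ.X_mul_X_sub_mem l p hlp hlz hpz)

/-- Modulo `J`, the multiples of `x_p x_q` only see `r` through its image under `x_z ↦ 0` and
`xₗ ↦ x_q` (`l ≠ z`), which is a polynomial in `x_q`. -/
theorem X_mul_X_mul_sub_aeval_mem (hJ : ContainsQuadrics J p q z) (hpz : p ≠ z) (hqz : q ≠ z)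
    {o : σ} (hop : o ≠ p) (hoq : o ≠ q) (hoz : o ≠ z) (r : MvPolynomial σ k) :
    X p * X q * (r - Polynomial.aeval (X q)
      (aeval (fun l => if l = z then 0 else Polynomial.X) r : Polynomial k)) ∈ J := by
  have hcolon : r - aeval (fun l => Polynomial.aeval (X q : MvPolynomial σ k)
      (if l = z then 0 else Polynomial.X : Polynomial k)) r ∈ J.colon {X p * X q} := by
    refine sub_aeval_mem (fun l => ?_) r
    rw [Submodule.mem_colon_singleton, smul_eq_mul, mul_comm, apply_ite (Polynomial.aeval _),
      map_zero, Polynomial.aeval_X]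
    exact hJ.X_mul_X_mul_sub_mem hpz hqz hop hoq hoz l
  rw [comp_aeval_apply, mul_comm]
  exact Submodule.mem_colon_singleton.mp hcolon

theorem exists_monomial_sub_mem (hJ : ContainsQuadrics J p q z) (hpz : p ≠ z) (hqz : q ≠ z)
    {o : σ} (hop : o ≠ p) (hoq : o ≠ q) (hoz : o ≠ z) {u : σ →₀ ℕ} {a b : σ} (hab : a ≠ b)
    (ha : a ∈ u.support) (hb : b ∈ u.support) (c : k) :
    ∃ g : Polynomial k, monomial u c - X p * X q * Polynomial.aeval (X q) g ∈ J := by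
  by_cases hz : z ∈ u.support
  · obtain ⟨y, hy, hyz⟩ : ∃ y ∈ u.support, y ≠ z := by
      by_cases haz : a = z
      · exact ⟨b, hb, haz ▸ hab.symm⟩
      · exact ⟨a, ha, haz⟩
    obtain ⟨r, hr⟩ := exists_monomial_eq_X_mul_X_mul hyz hy hz c
    exact ⟨0, by simpa [hr] using J.mul_mem_right r (hJ.X_mul_X_mem y hyz)⟩
  · have haz : a ≠ z := fun h => hz (h ▸ ha)
    have hbz : b ≠ z := fun h => hz (h ▸ hb)
    obtain ⟨r, hr⟩ := exists_monomial_eq_X_mul_X_mul hab ha hb c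
    refine ⟨aeval (fun l => if l = z then 0 else Polynomial.X) r, ?_⟩
    have := add_mem (J.mul_mem_right r (hJ.X_mul_X_sub_mem a b hab haz hbz))
      (hJ.X_mul_X_mul_sub_aeval_mem hpz hqz hop hoq hoz r)
    rw [hr]
    convert this using 1
    ring

variable [Fintype σ]

theorem exists_mixedPart_sub_mem (hJ : ContainsQuadrics J p q z) (hpz : p ≠ z) (hqz : q ≠ z)
    {o : σ} (hop : o ≠ p) (hoq : o ≠ q) (hoz : o ≠ z) (f : MvPolynomial σ k) :
    ∃ g : Polynomial k, mixedPart f - X p * X q * Polynomial.aeval (X q) g ∈ J := by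
  induction f using induction_on' with
  | monomial u c =>
    by_cases hu : 1 < u.support.card
    · obtain ⟨a, ha, b, hb, hab⟩ := Finset.one_lt_card.mp hu
      rw [mixedPart_monomial_of_mem_support hab ha hb]
      exact hJ.exists_monomial_sub_mem hpz hqz hop hoq hoz hab ha hb c
    · have : Nonempty σ := ⟨z⟩
      obtain ⟨i, hi⟩ := Finset.card_le_one_iff_subset_singleton.mp (not_lt.mp hu)
      exact ⟨0, by simp [mixedPart_monomial_of_support_subset hi]⟩
  | add f g hf hg =>
    obtain ⟨g₁, h₁⟩ := hf
    obtain ⟨g₂, h₂⟩ := hg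
    refine ⟨g₁ + g₂, ?_⟩
    rw [mixedPart_add, map_add, mul_add, add_sub_add_comm]
    exact add_mem h₁ h₂

end ContainsQuadrics

end Quadrics

section PointIdeal

variable {k : Type*} [Field k] {n : ℕ} {p : Fin (n + 1) → k} {i₀ : Fin (n + 1)}

theorem mem_pointIdeal_iff_aeval_eq_zero (hp : p i₀ = 1) {f : MvPolynomial (Fin (n + 1)) k} :
    f ∈ pointIdeal p ↔ aeval (fun j => C (p j) * X i₀) f = 0 := by
  constructor
  · intro hf
    refine (Ideal.span_le (I := RingHom.ker (aeval (R := k) fun j => C (p j) * X i₀))).mpr ?_ hf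
    rintro ℓ ⟨hℓ, hℓp⟩
    rw [SetLike.mem_coe, RingHom.mem_ker, hℓ.aeval_C_mul_X, hℓp, map_zero, zero_mul]
  · intro hf
    have hmem := sub_aeval_mem (I := pointIdeal p) (fun j => Ideal.subset_span
      ⟨(isHomogeneous_X _ _).sub (isHomogeneous_C_mul_X (p j) i₀), by simp [hp]⟩) f
    rwa [hf, sub_zero] at hmem

theorem mem_pointIdeal_of_isHomogeneous (hp : p i₀ = 1) {φ : MvPolynomial (Fin (n + 1)) k}
    {m : ℕ} (hφ : φ.IsHomogeneous m) (hφp : eval p φ = 0) : φ ∈ pointIdeal p := by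
  rw [mem_pointIdeal_iff_aeval_eq_zero hp, hφ.aeval_C_mul_X, hφp, map_zero, zero_mul]

theorem axisPart_eq_zero_of_mem_pointIdeal {i : Fin (n + 1)} (hp : p = Pi.single i 1)
    {f : MvPolynomial (Fin (n + 1)) k} (hf : f ∈ pointIdeal p) : axisPart i f = 0 := by
  rw [mem_pointIdeal_iff_aeval_eq_zero (i₀ := i) (by simp [hp])] at hf
  have : (Pi.single i (X i) : Fin (n + 1) → MvPolynomial (Fin (n + 1)) k) =
      fun j => C (p j) * X i := by
    funext j; rcases eq_or_ne j i with rfl | h <;> simp [*]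
  rwa [axisPart, this]

theorem eq_zero_of_X_mul_X_mul_aeval_mem_pointIdeal {a b : Fin (n + 1)} (ha : p a = 1)
    (hb : p b = 1) {g : Polynomial k}
    (h : X a * X b * Polynomial.aeval (X b) g ∈ pointIdeal p) : g = 0 := by
  rw [mem_pointIdeal_iff_aeval_eq_zero ha, map_mul, map_mul, ← Polynomial.aeval_algHom_apply,
    aeval_X, aeval_X, ha, hb, C_1, one_mul] at h
  have hg : Polynomial.aeval (X a : MvPolynomial (Fin (n + 1)) k) g = 0 :=
    (mul_eq_zero.mp h).resolve_left (mul_ne_zero (X_ne_zero a) (X_ne_zero a))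
  exact (transcendental_iff_injective.mp (transcendental_X k a)) (hg.trans (map_zero _).symm)

end PointIdeal

section HyperplanePoints

variable {k : Type*} [Field k] {n : ℕ}

variable (k n) in
noncomputable def hyperplaneQuadrics : Set (MvPolynomial (Fin (n + 1)) k) :=
  {f | (∃ i j : Fin (n + 1), i < j ∧ (j : ℕ) ≤ n - 1 ∧
      f = X i * X j - X (⟨n - 2, by omega⟩ : Fin (n + 1)) * X (⟨n - 1, by omega⟩ : Fin (n + 1))) ∨
    (∃ i : Fin (n + 1), (i : ℕ) ≤ n - 1 ∧ f = X i * X (Fin.last n))}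

variable (k n) in
noncomputable def hyperplanePointsIdeal : Ideal (MvPolynomial (Fin (n + 1)) k) :=
  (⨅ i : {i : Fin (n + 1) // (i : ℕ) ≤ n - 1},
      pointIdeal (fun j => if j = i.1 then (1 : k) else 0)) ⊓
    pointIdeal (fun j => if (j : ℕ) = n then (0 : k) else 1) ⊓
    pointIdeal (fun j => if (j : ℕ) = n then (1 : k) else 0)

theorem span_hyperplaneQuadrics_le_pointIdeal {x : Fin (n + 1) → k} {i₀ : Fin (n + 1)}
    (hx : x i₀ = 1)
    (h₁ : ∀ a b : Fin (n + 1), a < b → (b : ℕ) ≤ n - 1 →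
      x a * x b = x ⟨n - 2, by omega⟩ * x ⟨n - 1, by omega⟩)
    (h₂ : ∀ a : Fin (n + 1), (a : ℕ) ≤ n - 1 → x a * x (Fin.last n) = 0) :
    Ideal.span (hyperplaneQuadrics k n) ≤ pointIdeal x := by
  have hXX (a b : Fin (n + 1)) := (isHomogeneous_X k a).mul (isHomogeneous_X k b)
  rw [Ideal.span_le]
  rintro φ (⟨a, b, hab, hb, rfl⟩ | ⟨a, ha, rfl⟩)
  · exact mem_pointIdeal_of_isHomogeneous hx ((hXX a b).sub (hXX _ _)) (by simp [h₁ a b hab hb])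
  · exact mem_pointIdeal_of_isHomogeneous hx (hXX a _) (by simp [h₂ a ha])

theorem span_hyperplaneQuadrics_le_pointIdeal_ones (hn : n ≠ 0) :
    Ideal.span (hyperplaneQuadrics k n) ≤
      pointIdeal (fun j => if (j : ℕ) = n then (0 : k) else 1) := by
  have hone : ∀ c : Fin (n + 1), (c : ℕ) < n → (if (c : ℕ) = n then (0 : k) else 1) = 1 :=
    fun c hc => if_neg hc.ne
  refine span_hyperplaneQuadrics_le_pointIdeal (hone 0 (Nat.pos_of_ne_zero hn))
    (fun a b hab hb => ?_) (fun a _ => by simp)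
  have := Fin.lt_def.mp hab
  rw [hone a (by omega), hone b (by omega), hone ⟨n - 2, _⟩ (by simp only; omega),
    hone ⟨n - 1, _⟩ (by simp only; omega)]

theorem span_hyperplaneQuadrics_le (hn : n ≠ 0) :
    Ideal.span (hyperplaneQuadrics k n) ≤ hyperplanePointsIdeal k n := by
  refine le_inf (le_inf (le_iInf fun m => ?_) (span_hyperplaneQuadrics_le_pointIdeal_ones hn)) ?_
  · have hmZ : Fin.last n ≠ m.1 :=
      Fin.ne_of_val_ne (by have := m.2; simp only [Fin.val_last]; omega)
    have hsingle : ∀ x y : Fin (n + 1), x ≠ y →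
        (if x = m.1 then (1 : k) else 0) * (if y = m.1 then 1 else 0) = 0 := by
      intro x y hxy
      by_cases hx : x = m.1
      · rw [if_neg (show y ≠ m.1 from fun hy => hxy (hx.trans hy.symm)), mul_zero]
      · rw [if_neg hx, zero_mul]
    refine span_hyperplaneQuadrics_le_pointIdeal (if_pos rfl) (fun a b hab hb => ?_)
      (fun a _ => by simp [hmZ])
    have := Fin.lt_def.mp hab
    rw [hsingle a b hab.ne, hsingle _ _ (Fin.ne_of_val_ne (show n - 2 ≠ n - 1 by omega))]
  · refine span_hyperplaneQuadrics_le_pointIdeal (i₀ := Fin.last n) (by simp)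
      (fun a b hab hb => ?_) (fun a ha => ?_)
    · rw [if_neg (show (b : ℕ) ≠ n by omega), if_neg (show n - 1 ≠ n by omega), mul_zero,
        mul_zero]
    · rw [if_neg (show (a : ℕ) ≠ n by omega), zero_mul]

theorem containsQuadrics_span_hyperplaneQuadrics :
    ContainsQuadrics (Ideal.span (hyperplaneQuadrics k n)) ⟨n - 2, by omega⟩ ⟨n - 1, by omega⟩
      (Fin.last n) := by
  have hle : ∀ a : Fin (n + 1), a ≠ Fin.last n → (a : ℕ) ≤ n - 1 := fun a ha =>
    Nat.le_sub_one_of_lt (Fin.val_lt_last ha)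
  refine ⟨fun a b hab ha hb => ?_, fun a ha => Ideal.subset_span (Or.inr ⟨a, hle a ha, rfl⟩)⟩
  rcases hab.lt_or_gt with h | h
  · exact Ideal.subset_span (Or.inl ⟨a, b, h, hle b hb, rfl⟩)
  · rw [mul_comm (X a)]
    exact Ideal.subset_span (Or.inl ⟨b, a, h, hle a ha, rfl⟩)

theorem axisPart_eq_zero_of_mem_hyperplanePointsIdeal {f : MvPolynomial (Fin (n + 1)) k}
    (hf : f ∈ hyperplanePointsIdeal k n) (i : Fin (n + 1)) : axisPart i f = 0 := by
  obtain ⟨⟨hcoord, -⟩, hlast⟩ := hf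
  rcases eq_or_ne i (Fin.last n) with rfl | hi
  · refine axisPart_eq_zero_of_mem_pointIdeal ?_ hlast
    ext j; simp [Pi.single_apply, Fin.ext_iff]
  · refine axisPart_eq_zero_of_mem_pointIdeal ?_
      (Ideal.mem_iInf.mp hcoord ⟨i, Nat.le_sub_one_of_lt (Fin.val_lt_last hi)⟩)
    ext j; simp [Pi.single_apply]

theorem hyperplanePointsIdeal_le_span (hn : 3 ≤ n) :
    hyperplanePointsIdeal k n ≤ Ideal.span (hyperplaneQuadrics k n) := by
  intro f hf
  have hmixed : mixedPart f = f :=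
    mixedPart_eq_self_of_forall_axisPart_eq_zero
      (axisPart_eq_zero_of_mem_hyperplanePointsIdeal hf)
  have hne (a b : Fin (n + 1)) (h : (a : ℕ) ≠ b) : a ≠ b := Fin.ne_of_val_ne h
  obtain ⟨g, hg⟩ := containsQuadrics_span_hyperplaneQuadrics.exists_mixedPart_sub_mem
    (hne _ _ (by simp only [Fin.val_last]; omega)) (hne _ _ (by simp only [Fin.val_last]; omega))
    (hne 0 _ (by simp only [Fin.val_zero]; omega)) (hne 0 _ (by simp only [Fin.val_zero]; omega))
    (hne 0 _ (by simp only [Fin.val_zero, Fin.val_last]; omega)) f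
  rw [hmixed] at hg
  have hw : X (⟨n - 2, by omega⟩ : Fin (n + 1)) * X ⟨n - 1, by omega⟩ *
      Polynomial.aeval (X ⟨n - 1, by omega⟩) g ∈
      pointIdeal (fun j => if (j : ℕ) = n then (0 : k) else 1) := by
    simpa using sub_mem hf.1.2 (span_hyperplaneQuadrics_le_pointIdeal_ones (by omega) hg)
  have hg0 : g = 0 := by
    refine eq_zero_of_X_mul_X_mul_aeval_mem_pointIdeal ?_ ?_ hw <;>
      exact if_neg (by simp only; omega)
  simpa [hg0] using hg

end HyperplanePoints

/-- For `n ≥ 3`, the ideal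
`J' = ({xᵢxⱼ - x_{n-2}x_{n-1} : 0 ≤ i < j ≤ n-1} ∪ {xᵢxₙ : 0 ≤ i ≤ n-1})` equals the defining
ideal of the `n+2` points of `ℙⁿ` consisting of the coordinate points `e₀,…,e_{n-1}` of the
hyperplane `xₙ = 0`, the point `[1:…:1:0]`, and the point `[0:…:0:1]`. -/
theorem stmt_14 {k : Type*} [Field k] (n : ℕ) (hn : 3 ≤ n)
    (J' : Ideal (MvPolynomial (Fin (n + 1)) k))
    (hJ' : J' = Ideal.span {f | (∃ i j : Fin (n + 1), i < j ∧ (j : ℕ) ≤ n - 1 ∧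
        f = X i * X j -
          X (⟨n - 2, by omega⟩ : Fin (n + 1)) * X (⟨n - 1, by omega⟩ : Fin (n + 1))) ∨
      (∃ i : Fin (n + 1), (i : ℕ) ≤ n - 1 ∧ f = X i * X (⟨n, by omega⟩ : Fin (n + 1)))}) :
    J' = (⨅ i : {i : Fin (n + 1) // (i : ℕ) ≤ n - 1},
            pointIdeal (fun j => if j = i.1 then (1 : k) else 0)) ⊓
         pointIdeal (fun j => if (j : ℕ) = n then (0 : k) else 1) ⊓
         pointIdeal (fun j => if (j : ℕ) = n then (1 : k) else 0) := by
  subst hJ'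
  exact le_antisymm (span_hyperplaneQuadrics_le (by omega)) (hyperplanePointsIdeal_le_span hn)
end

section
/- Let J = (xz - yz, xy - yz) ⊂ k[x,y,z] and I = (J, I_2(Θ)) its Jacobian ideal (an (x,y,z)-primary ideal minimally generated by 5 quadrics). Then the special fiber algebra k[I] ⊂ k[x,y,z] generated by the five quadrics has Krull dimension 3, i.e., the rational map P^2 ⇢ P^4 defined by the five quadrics has 2-dimensional image. -/
/-!
The five quadrics together with `xz` span all quadrics, and every cubic multiple of `xz` lies in
`I · (x, y, z)`. Hence `k[x,y,z]` is generated as a `k[I]`-module by `1, x, y, z, xz`, so it is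
finite, hence integral, over `k[I]`. Going up and incomparability make Krull dimension invariant
under injective integral extensions, so `dim k[I] = dim k[x,y,z] = 3`.
-/

open MvPolynomial

section IntegralExtension

variable {R S : Type*} [CommRing R] [CommRing S] [Algebra R S] [Algebra.IsIntegral R S]

theorem ringKrullDim_le_of_isIntegral : ringKrullDim S ≤ ringKrullDim R :=
  Order.krullDim_le_of_strictMono (PrimeSpectrum.comap (algebraMap R S)) fun _ _ h =>
    Ideal.IsIntegral.comap_lt_comap (R := R) h

theorem ringKrullDim_eq_of_isIntegral [FaithfulSMul R S] : ringKrullDim R = ringKrullDim S := by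
  refine le_antisymm (iSup_le fun l => ?_) ringKrullDim_le_of_isIntegral
  obtain ⟨⟨P, _, _⟩⟩ := Ideal.nonempty_primesOver (S := S) l.head.asIdeal
  obtain ⟨L, hL, -⟩ := Ideal.exists_ltSeries_of_hasGoingUp l P
  exact hL ▸ Order.LTSeries.length_le_krullDim L

end IntegralExtension

noncomputable section

namespace JacobianQuadrics

variable (R : Type*) [CommRing R]

def quadrics : Fin 5 → MvPolynomial (Fin 3) R :=
  ![X 0 * X 1 - X 0 * X 2, X 0 * X 2 - X 1 * X 2,
    X 0 * X 2 + X 1 * X 2 - X 2 ^ 2, -(X 0 * X 1) + X 1 ^ 2 - X 1 * X 2,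
    -(X 0 ^ 2) + X 0 * X 1 + X 0 * X 2]

def specialFiber : Subalgebra R (MvPolynomial (Fin 3) R) :=
  Algebra.adjoin R (Set.range (quadrics R))

def moduleGens : Fin 5 → MvPolynomial (Fin 3) R :=
  ![1, X 0, X 1, X 2, X 0 * X 2]

def mulXCoeffs : Fin 3 → Fin 5 → Fin 5 → MvPolynomial (Fin 5) R :=
  ![![![0, 1, 0, 0, 0], ![X 0 - X 4, 0, 0, 0, 2], ![X 0, 0, 0, 0, 1], ![0, 0, 0, 0, 1],
      ![0, X 2, 0, -X 0, 0]],
    ![![0, 0, 1, 0, 0], ![X 0, 0, 0, 0, 1], ![X 0 - X 1 + X 3, 0, 0, 0, 2], ![-X 1, 0, 0, 0, 1],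
      ![0, X 2 - X 1, 0, -X 0, 0]],
    ![![0, 0, 0, 1, 0], ![0, 0, 0, 0, 1], ![-X 1, 0, 0, 0, 1], ![-X 1 - X 2, 0, 0, 0, 2],
      ![0, X 2 - X 1, 0, -2 * X 0, 0]]]

theorem X_mul_moduleGens (i : Fin 3) (j : Fin 5) :
    X i * moduleGens R j =
      ∑ l, aeval (quadrics R) (mulXCoeffs R i j l) * moduleGens R l := by
  fin_cases i <;> fin_cases j <;>
    simp [Fin.sum_univ_five, quadrics, moduleGens, mulXCoeffs, map_ofNat] <;> ring

theorem aeval_quadrics_mem_specialFiber (p : MvPolynomial (Fin 5) R) :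
    aeval (quadrics R) p ∈ specialFiber R := by
  rw [specialFiber, Algebra.adjoin_range_eq_range_aeval]
  exact ⟨p, rfl⟩

theorem X_mul_mem_span_moduleGens (i : Fin 3) {p : MvPolynomial (Fin 3) R}
    (hp : p ∈ Submodule.span (specialFiber R) (Set.range (moduleGens R))) :
    X i * p ∈ Submodule.span (specialFiber R) (Set.range (moduleGens R)) := by
  induction hp using Submodule.span_induction with
  | mem _ hp =>
    obtain ⟨j, rfl⟩ := hp
    rw [X_mul_moduleGens]
    refine Submodule.sum_mem _ fun l _ => ?_
    have := Submodule.smul_mem (Submodule.span (specialFiber R) (Set.range (moduleGens R)))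
      ⟨_, aeval_quadrics_mem_specialFiber R (mulXCoeffs R i j l)⟩
      (Submodule.subset_span ⟨l, rfl⟩)
    rwa [Subalgebra.smul_def] at this
  | zero => simp
  | add _ _ _ _ hp hq => rw [mul_add]; exact add_mem hp hq
  | smul a _ _ hp => rw [mul_smul_comm]; exact Submodule.smul_mem _ a hp

theorem span_moduleGens_eq_top :
    Submodule.span (specialFiber R) (Set.range (moduleGens R)) = ⊤ := by
  refine Submodule.eq_top_iff'.2 fun p => ?_
  induction p using MvPolynomial.induction_on with
  | C a =>
    rw [← mul_one (C a)]
    exact Submodule.smul_mem _ (algebraMap R (specialFiber R) a)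
      (Submodule.subset_span ⟨0, rfl⟩)
  | add _ _ hp hq => exact add_mem hp hq
  | mul_X p i hp => rw [mul_comm]; exact X_mul_mem_span_moduleGens R i hp

instance : Module.Finite (specialFiber R) (MvPolynomial (Fin 3) R) :=
  ⟨(Submodule.fg_def).2 ⟨_, Set.finite_range _, span_moduleGens_eq_top R⟩⟩

theorem ringKrullDim_specialFiber (k : Type*) [Field k] : ringKrullDim (specialFiber k) = 3 := by
  rw [ringKrullDim_eq_of_isIntegral (S := MvPolynomial (Fin 3) k),
    MvPolynomial.ringKrullDim_of_isNoetherianRing, ringKrullDim_eq_zero_of_field]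
  simp

end JacobianQuadrics

end

theorem stmt_19_general {k : Type*} [Field k]
    (q : Fin 5 → MvPolynomial (Fin 3) k)
    (hq : q = ![X 0 * X 1 - X 0 * X 2, X 0 * X 2 - X 1 * X 2,
      X 0 * X 2 + X 1 * X 2 - X 2 ^ 2, -(X 0 * X 1) + X 1 ^ 2 - X 1 * X 2,
      -(X 0 ^ 2) + X 0 * X 1 + X 0 * X 2]) :
    ringKrullDim (Algebra.adjoin k (Set.range q)) = 3 := by
  subst hq
  exact JacobianQuadrics.ringKrullDim_specialFiber k

/-- For `J = (xz - yz, xy - yz) ⊂ k[x,y,z]` the Jacobian ideal is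
`I = (xy - xz, xz - yz, xz + yz - z², -xy + y² - yz, -x² + xy + xz)`.  The special fiber
algebra `k[I]`, i.e. the `k`-subalgebra of `k[x,y,z]` generated by these five quadrics, has
Krull dimension 3 (equivalently, the rational map `ℙ² ⇢ ℙ⁴` defined by the five quadrics has
2-dimensional image). -/
theorem stmt_19 {k : Type*} [Field k] [CharZero k] [IsAlgClosed k]
    (q : Fin 5 → MvPolynomial (Fin 3) k)
    (hq : q = ![X 0 * X 1 - X 0 * X 2, X 0 * X 2 - X 1 * X 2,
      X 0 * X 2 + X 1 * X 2 - X 2 ^ 2, -(X 0 * X 1) + X 1 ^ 2 - X 1 * X 2,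
      -(X 0 ^ 2) + X 0 * X 1 + X 0 * X 2]) :
    ringKrullDim (Algebra.adjoin k (Set.range q)) = 3 :=
  stmt_19_general q hq
end
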